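/- arXiv:2307.16056 — 8 statements merged into one kernel-verified Lean document; each statement's English description precedes it below -/
import Mathlib

section
/- Let 𝒜 = {A₁, A₂, A₃, A₄} be a 4-cover of ℝ such that A₂ is of type F_σ in the euclidean topology on ℝ (a countable union of euclidean-closed sets) but A₃ or A₄ is not of type G_δσ in the euclidean topology on ℝ (not a countable union of countable intersections of euclidean-open sets). Then the hybrid space H₄(𝒜) is not quasi-metrizable. -/
open Set

/-- The Sorgenfrey topology on ℝ (generated by the intervals `[a, b)`). -/
def sorgenfreyTop : TopologicalSpace ℝ :=
  TopologicalSpace.generateFrom {S : Set ℝ | ∃ a b : ℝ, S = Set.Ico a b}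

/-- The "left" Sorgenfrey topology on ℝ (generated by the intervals `(a, b]`). -/
def sorgenfreyLeftTop : TopologicalSpace ℝ :=
  TopologicalSpace.generateFrom {S : Set ℝ | ∃ a b : ℝ, S = Set.Ioc a b}

/-- `A₁, A₂, A₃, A₄` form a 4-cover of ℝ: pairwise disjoint with union ℝ. -/
def Is4Cover (A₁ A₂ A₃ A₄ : Set ℝ) : Prop :=
  A₁ ∪ A₂ ∪ A₃ ∪ A₄ = Set.univ ∧
  Disjoint A₁ A₂ ∧ Disjoint A₁ A₃ ∧ Disjoint A₁ A₄ ∧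
  Disjoint A₂ A₃ ∧ Disjoint A₂ A₄ ∧ Disjoint A₃ A₄

/-- The hybrid topology determined by a 4-cover: points of `A₁` have the usual
open intervals as a local base, points of `A₂` are isolated, points of `A₃`
have a local base of sets `[x, x+ε)`, and points of `A₄` of sets `(x-ε, x]`. -/
def hybridTop (A₁ A₂ A₃ A₄ : Set ℝ) : TopologicalSpace ℝ :=
  TopologicalSpace.generateFrom
    ({S : Set ℝ | ∃ x ∈ A₁, ∃ ε : ℝ, 0 < ε ∧ S = Set.Ioo (x - ε) (x + ε)} ∪
     {S : Set ℝ | ∃ x ∈ A₂, S = {x}} ∪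
     {S : Set ℝ | ∃ x ∈ A₃, ∃ ε : ℝ, 0 < ε ∧ S = Set.Ico x (x + ε)} ∪
     {S : Set ℝ | ∃ x ∈ A₄, ∃ ε : ℝ, 0 < ε ∧ S = Set.Ioc (x - ε) x})

/-- A quasi-metric: nonnegative, vanishing exactly on the diagonal,
satisfying the triangle inequality. -/
def IsQuasiMetric {X : Type*} (ρ : X → X → ℝ) : Prop :=
  (∀ x y, 0 ≤ ρ x y) ∧ (∀ x y, ρ x y = 0 ↔ x = y) ∧
  (∀ x y z, ρ x y ≤ ρ x z + ρ z y)

/-- A non-archimedean quasi-metric. -/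
def IsNAQuasiMetric {X : Type*} (ρ : X → X → ℝ) : Prop :=
  IsQuasiMetric ρ ∧ ∀ x y z, ρ x y ≤ max (ρ x z) (ρ z y)

/-- The topology induced by a quasi-metric: the balls `B_ρ(x, r)` form a base. -/
def quasiMetricTop {X : Type*} (ρ : X → X → ℝ) : TopologicalSpace X :=
  TopologicalSpace.generateFrom
    {B : Set X | ∃ x : X, ∃ r : ℝ, 0 < r ∧ B = {y : X | ρ x y < r}}

/-- A topology is quasi-metrizable if it is induced by some quasi-metric. -/
def QuasiMetrizableTop {X : Type*} (t : TopologicalSpace X) : Prop :=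
  ∃ ρ : X → X → ℝ, IsQuasiMetric ρ ∧ t = quasiMetricTop ρ

/-- A topology is non-archimedeanly quasi-metrizable if it is induced by some
non-archimedean quasi-metric. -/
def NAQuasiMetrizableTop {X : Type*} (t : TopologicalSpace X) : Prop :=
  ∃ ρ : X → X → ℝ, IsNAQuasiMetric ρ ∧ t = quasiMetricTop ρ


section Aux

open TopologicalSpace

variable {α : Type*}

lemma generateOpen_basis {g : Set (Set α)}
    (hcov : ∀ x : α, ∃ s ∈ g, x ∈ s)
    (hint : ∀ s₁ ∈ g, ∀ s₂ ∈ g, ∀ x ∈ s₁ ∩ s₂, ∃ s₃ ∈ g, x ∈ s₃ ∧ s₃ ⊆ s₁ ∩ s₂)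
    {U : Set α} (h : GenerateOpen g U) : ∀ x ∈ U, ∃ s ∈ g, x ∈ s ∧ s ⊆ U := by
  induction h with
  | basic s hs => exact fun x hx => ⟨s, hs, hx, subset_rfl⟩
  | univ => intro x _; obtain ⟨s, hs, hxs⟩ := hcov x; exact ⟨s, hs, hxs, subset_univ _⟩
  | inter U V _ _ ihU ihV =>
      intro x hx
      obtain ⟨s₁, hs₁, hx₁, hsub₁⟩ := ihU x hx.1
      obtain ⟨s₂, hs₂, hx₂, hsub₂⟩ := ihV x hx.2
      obtain ⟨s₃, hs₃, hx₃, hsub₃⟩ := hint s₁ hs₁ s₂ hs₂ x ⟨hx₁, hx₂⟩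
      exact ⟨s₃, hs₃, hx₃, fun y hy => ⟨hsub₁ (hsub₃ hy).1, hsub₂ (hsub₃ hy).2⟩⟩
  | sUnion S _ ih =>
      rintro x ⟨t, htS, hxt⟩
      obtain ⟨s, hs, hxs, hsub⟩ := ih t htS x hxt
      exact ⟨s, hs, hxs, hsub.trans (subset_sUnion_of_mem htS)⟩

lemma generateOpen_of_pointwise {g : Set (Set α)} {U : Set α}
    (h : ∀ x ∈ U, ∃ V, GenerateOpen g V ∧ x ∈ V ∧ V ⊆ U) : GenerateOpen g U := by
  have hU : U = ⋃₀ {V | GenerateOpen g V ∧ V ⊆ U} := by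
    ext x
    constructor
    · intro hx
      obtain ⟨V, h1, h2, h3⟩ := h x hx
      exact ⟨V, ⟨h1, h3⟩, h2⟩
    · rintro ⟨V, ⟨_, hVU⟩, hxV⟩
      exact hVU hxV
  rw [hU]
  exact .sUnion _ fun s hs => hs.1

/-- A `c`-separated subset of `ℝ` is countable. -/
lemma countable_of_separated {S : Set ℝ} {c : ℝ} (hc : 0 < c)
    (hsep : ∀ x ∈ S, ∀ y ∈ S, x < y → x + c ≤ y) : S.Countable := by
  obtain ⟨e, he⟩ := Countable.exists_injective_nat ℚ
  have : ∀ x : ℝ, ∃ q : ℚ, x ∈ S → (x < q ∧ (q : ℝ) < x + c) := by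
    intro x
    by_cases hx : x ∈ S
    · obtain ⟨q, hq1, hq2⟩ := exists_rat_btwn (lt_add_of_pos_right x hc)
      exact ⟨q, fun _ => ⟨hq1, hq2⟩⟩
    · exact ⟨0, fun h => absurd h hx⟩
  choose q hq using this
  rw [Set.countable_iff_exists_injOn]
  refine ⟨fun x => e (q x), fun x hx y hy hxy => ?_⟩
  by_contra hne
  rcases lt_trichotomy x y with h | h | h
  · have h1 := (hq x hx).2
    have h2 := (hq y hy).1
    have := hsep x hx y hy h
    have : (q x : ℝ) < q y := by linarith
    exact absurd (he hxy) (by exact_mod_cast ne_of_lt this)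
  · exact hne h
  · have h1 := (hq y hy).2
    have h2 := (hq x hx).1
    have := hsep y hy x hx h
    have : (q y : ℝ) < q x := by linarith
    exact absurd (he hxy.symm) (by exact_mod_cast ne_of_lt this)

end Aux


/-- The generating family of the hybrid topology. -/
def hybGen (A₁ A₂ A₃ A₄ : Set ℝ) : Set (Set ℝ) :=
  {S : Set ℝ | ∃ x ∈ A₁, ∃ ε : ℝ, 0 < ε ∧ S = Set.Ioo (x - ε) (x + ε)} ∪
  {S : Set ℝ | ∃ x ∈ A₂, S = {x}} ∪
  {S : Set ℝ | ∃ x ∈ A₃, ∃ ε : ℝ, 0 < ε ∧ S = Set.Ico x (x + ε)} ∪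
  {S : Set ℝ | ∃ x ∈ A₄, ∃ ε : ℝ, 0 < ε ∧ S = Set.Ioc (x - ε) x}

open scoped Classical in
/-- The canonical basic neighborhood of `x` of size `ε`. -/
noncomputable def core (A₂ A₃ A₄ : Set ℝ) (x ε : ℝ) : Set ℝ :=
  if x ∈ A₂ then {x}
  else if x ∈ A₃ then Set.Ico x (x + ε)
  else if x ∈ A₄ then Set.Ioc (x - ε) x
  else Set.Ioo (x - ε) (x + ε)

section CoreLemmas

variable {A₁ A₂ A₃ A₄ : Set ℝ} (hcov : Is4Cover A₁ A₂ A₃ A₄)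

lemma mem_core {x ε : ℝ} (hε : 0 < ε) : x ∈ core A₂ A₃ A₄ x ε := by
  unfold core
  split_ifs with h1 h2 h3
  · exact rfl
  · exact ⟨le_refl x, by linarith⟩
  · exact ⟨by linarith, le_refl x⟩
  · exact ⟨by linarith, by linarith⟩

lemma mem_A₁_of_not (hcov : Is4Cover A₁ A₂ A₃ A₄) {x : ℝ}
    (h2 : x ∉ A₂) (h3 : x ∉ A₃) (h4 : x ∉ A₄) : x ∈ A₁ := by
  have := hcov.1
  have hx : x ∈ A₁ ∪ A₂ ∪ A₃ ∪ A₄ := this ▸ mem_univ x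
  rcases hx with ((h | h) | h) | h
  · exact h
  · exact absurd h h2
  · exact absurd h h3
  · exact absurd h h4

lemma core_mem_hybGen (hcov : Is4Cover A₁ A₂ A₃ A₄) {x ε : ℝ} (hε : 0 < ε) :
    core A₂ A₃ A₄ x ε ∈ hybGen A₁ A₂ A₃ A₄ := by
  unfold core
  split_ifs with h1 h2 h3
  · exact Or.inl (Or.inl (Or.inr ⟨x, h1, rfl⟩))
  · exact Or.inl (Or.inr ⟨x, h2, ε, hε, rfl⟩)
  · exact Or.inr ⟨x, h3, ε, hε, rfl⟩
  · exact Or.inl (Or.inl (Or.inl ⟨x, mem_A₁_of_not hcov h1 h2 h3, ε, hε, rfl⟩))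

lemma core_subset_Ioo {x ε ε' : ℝ} (hε : 0 < ε) (hεε' : ε ≤ ε') :
    core A₂ A₃ A₄ x ε ⊆ Set.Ioo (x - ε') (x + ε') := by
  have hε' : 0 < ε' := lt_of_lt_of_le hε hεε'
  unfold core
  split_ifs with h1 h2 h3
  · intro y hy
    rw [mem_singleton_iff] at hy
    exact ⟨by rw [hy]; linarith, by rw [hy]; linarith⟩
  · rintro y ⟨hy1, hy2⟩; exact ⟨by linarith, by linarith⟩
  · rintro y ⟨hy1, hy2⟩; exact ⟨by linarith, by linarith⟩
  · rintro y ⟨hy1, hy2⟩; exact ⟨by linarith, by linarith⟩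

lemma core_mono {x ε ε' : ℝ} (h : ε ≤ ε') :
    core A₂ A₃ A₄ x ε ⊆ core A₂ A₃ A₄ x ε' := by
  unfold core
  split_ifs with h1 h2 h3
  · exact subset_rfl
  · rintro y ⟨hy1, hy2⟩; exact ⟨hy1, by linarith⟩
  · rintro y ⟨hy1, hy2⟩; exact ⟨by linarith, hy2⟩
  · rintro y ⟨hy1, hy2⟩; exact ⟨by linarith, by linarith⟩

/-- Every generator containing `x` contains a core at `x`. -/
lemma exists_core_subset (hcov : Is4Cover A₁ A₂ A₃ A₄) {s : Set ℝ} {x : ℝ}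
    (hs : s ∈ hybGen A₁ A₂ A₃ A₄) (hx : x ∈ s) :
    ∃ ε : ℝ, 0 < ε ∧ core A₂ A₃ A₄ x ε ⊆ s := by
  obtain ⟨hu, d12, d13, d14, d23, d24, d34⟩ := hcov
  rcases hs with ((⟨a, ha, ε, hε, rfl⟩ | ⟨a, ha, rfl⟩) | ⟨a, ha, ε, hε, rfl⟩) | ⟨a, ha, ε, hε, rfl⟩
  · -- Ioo (a-ε) (a+ε)
    obtain ⟨h1, h2⟩ := hx
    refine ⟨min (x - (a - ε)) (a + ε - x), by simp [h1, h2, sub_pos], ?_⟩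
    intro y hy
    have := core_subset_Ioo (A₂ := A₂) (A₃ := A₃) (A₄ := A₄)
      (x := x) (by simp [h1, h2, sub_pos] : (0:ℝ) < min (x - (a - ε)) (a + ε - x)) le_rfl hy
    obtain ⟨hy1, hy2⟩ := this
    have l1 : min (x - (a - ε)) (a + ε - x) ≤ x - (a - ε) := min_le_left _ _
    have l2 : min (x - (a - ε)) (a + ε - x) ≤ a + ε - x := min_le_right _ _
    exact ⟨by linarith, by linarith⟩
  · -- {a}, a ∈ A₂
    rw [mem_singleton_iff] at hx
    subst hx
    refine ⟨1, one_pos, ?_⟩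
    have : core A₂ A₃ A₄ x 1 = {x} := if_pos ha
    rw [this]
  · -- Ico a (a+ε), a ∈ A₃
    rcases eq_or_ne x a with rfl | hne
    · refine ⟨ε, hε, ?_⟩
      have hx2 : x ∉ A₂ := fun h => d23.ne_of_mem h ha rfl
      have : core A₂ A₃ A₄ x ε = Set.Ico x (x + ε) := by
        unfold core; rw [if_neg hx2, if_pos ha]
      rw [this]
    · have h1 : a < x := lt_of_le_of_ne hx.1 (Ne.symm hne)
      have h2 : x < a + ε := hx.2
      refine ⟨min (x - a) (a + ε - x), by simp [h1, h2, sub_pos], ?_⟩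
      intro y hy
      have := core_subset_Ioo (A₂ := A₂) (A₃ := A₃) (A₄ := A₄)
        (x := x) (by simp [h1, h2, sub_pos] : (0:ℝ) < min (x - a) (a + ε - x)) le_rfl hy
      obtain ⟨hy1, hy2⟩ := this
      have l1 : min (x - a) (a + ε - x) ≤ x - a := min_le_left _ _
      have l2 : min (x - a) (a + ε - x) ≤ a + ε - x := min_le_right _ _
      exact ⟨by linarith, by linarith⟩
  · -- Ioc (a-ε) a, a ∈ A₄
    rcases eq_or_ne x a with rfl | hne
    · refine ⟨ε, hε, ?_⟩
      have hx2 : x ∉ A₂ := fun h => d24.ne_of_mem h ha rfl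
      have hx3 : x ∉ A₃ := fun h => d34.ne_of_mem h ha rfl
      have : core A₂ A₃ A₄ x ε = Set.Ioc (x - ε) x := by
        unfold core; rw [if_neg hx2, if_neg hx3, if_pos ha]
      rw [this]
    · have h1 : a - ε < x := hx.1
      have h2 : x < a := lt_of_le_of_ne hx.2 hne
      refine ⟨min (x - (a - ε)) (a - x), by simp [h1, h2, sub_pos], ?_⟩
      intro y hy
      have := core_subset_Ioo (A₂ := A₂) (A₃ := A₃) (A₄ := A₄)
        (x := x) (by simp [h1, h2, sub_pos] : (0:ℝ) < min (x - (a - ε)) (a - x)) le_rfl hy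
      obtain ⟨hy1, hy2⟩ := this
      have l1 : min (x - (a - ε)) (a - x) ≤ x - (a - ε) := min_le_left _ _
      have l2 : min (x - (a - ε)) (a - x) ≤ a - x := min_le_right _ _
      exact ⟨by linarith, by linarith⟩

end CoreLemmas

section BallSide

open TopologicalSpace

/-- The generating family of balls of a quasi-metric. -/
def ballGen (ρ : ℝ → ℝ → ℝ) : Set (Set ℝ) :=
  {B : Set ℝ | ∃ x : ℝ, ∃ r : ℝ, 0 < r ∧ B = {y : ℝ | ρ x y < r}}

def IsQuasiMetric' (ρ : ℝ → ℝ → ℝ) : Prop :=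
  (∀ x y, 0 ≤ ρ x y) ∧ (∀ x y, ρ x y = 0 ↔ x = y) ∧
  (∀ x y z, ρ x y ≤ ρ x z + ρ z y)

variable {ρ : ℝ → ℝ → ℝ} (hρ : IsQuasiMetric' ρ)

lemma rho_self (hρ : IsQuasiMetric' ρ) (x : ℝ) : ρ x x = 0 := (hρ.2.1 x x).2 rfl

lemma ballGen_cover (hρ : IsQuasiMetric' ρ) (x : ℝ) : ∃ s ∈ ballGen ρ, x ∈ s :=
  ⟨{y : ℝ | ρ x y < 1}, ⟨x, 1, one_pos, rfl⟩, by simp [rho_self hρ]⟩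

lemma ballGen_inter (hρ : IsQuasiMetric' ρ) :
    ∀ s₁ ∈ ballGen ρ, ∀ s₂ ∈ ballGen ρ, ∀ x ∈ s₁ ∩ s₂,
      ∃ s₃ ∈ ballGen ρ, x ∈ s₃ ∧ s₃ ⊆ s₁ ∩ s₂ := by
  rintro s₁ ⟨z₁, r₁, hr₁, rfl⟩ s₂ ⟨z₂, r₂, hr₂, rfl⟩ x ⟨hx₁, hx₂⟩
  simp only [mem_setOf_eq] at hx₁ hx₂
  refine ⟨{y : ℝ | ρ x y < min (r₁ - ρ z₁ x) (r₂ - ρ z₂ x)},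
    ⟨x, _, by simp [hx₁, hx₂, sub_pos], rfl⟩, by simp [rho_self hρ, hx₁, hx₂, sub_pos], ?_⟩
  intro y hy
  simp only [mem_setOf_eq, lt_min_iff] at hy
  constructor
  · simp only [mem_setOf_eq]
    calc ρ z₁ y ≤ ρ z₁ x + ρ x y := hρ.2.2 _ _ _
    _ < ρ z₁ x + (r₁ - ρ z₁ x) := by linarith [hy.1]
    _ = r₁ := by ring
  · simp only [mem_setOf_eq]
    calc ρ z₂ y ≤ ρ z₂ x + ρ x y := hρ.2.2 _ _ _
    _ < ρ z₂ x + (r₂ - ρ z₂ x) := by linarith [hy.2]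
    _ = r₂ := by ring

/-- In the quasi-metric generated topology, every open set containing `x`
contains a ball centered at `x`. -/
lemma ball_nhds (hρ : IsQuasiMetric' ρ) {U : Set ℝ} (hU : GenerateOpen (ballGen ρ) U)
    {x : ℝ} (hx : x ∈ U) : ∃ r : ℝ, 0 < r ∧ {y : ℝ | ρ x y < r} ⊆ U := by
  obtain ⟨s, hs, hxs, hsub⟩ := generateOpen_basis (ballGen_cover hρ) (ballGen_inter hρ) hU x hx
  obtain ⟨z, r, hr, rfl⟩ := hs
  simp only [mem_setOf_eq] at hxs
  refine ⟨r - ρ z x, by linarith, fun y hy => hsub ?_⟩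
  simp only [mem_setOf_eq] at hy ⊢
  calc ρ z y ≤ ρ z x + ρ x y := hρ.2.2 _ _ _
  _ < r := by linarith

end BallSide

section HybSide

open TopologicalSpace

variable {A₁ A₂ A₃ A₄ : Set ℝ}

lemma hybGen_cover (hcov : Is4Cover A₁ A₂ A₃ A₄) (x : ℝ) :
    ∃ s ∈ hybGen A₁ A₂ A₃ A₄, x ∈ s :=
  ⟨core A₂ A₃ A₄ x 1, core_mem_hybGen hcov one_pos, mem_core one_pos⟩

lemma hybGen_inter (hcov : Is4Cover A₁ A₂ A₃ A₄) :
    ∀ s₁ ∈ hybGen A₁ A₂ A₃ A₄, ∀ s₂ ∈ hybGen A₁ A₂ A₃ A₄, ∀ x ∈ s₁ ∩ s₂,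
      ∃ s₃ ∈ hybGen A₁ A₂ A₃ A₄, x ∈ s₃ ∧ s₃ ⊆ s₁ ∩ s₂ := by
  intro s₁ hs₁ s₂ hs₂ x hx
  obtain ⟨ε₁, hε₁, hsub₁⟩ := exists_core_subset hcov hs₁ hx.1
  obtain ⟨ε₂, hε₂, hsub₂⟩ := exists_core_subset hcov hs₂ hx.2
  refine ⟨core A₂ A₃ A₄ x (min ε₁ ε₂), core_mem_hybGen hcov (lt_min hε₁ hε₂),
    mem_core (lt_min hε₁ hε₂), fun y hy => ⟨hsub₁ (core_mono (min_le_left _ _) hy),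
      hsub₂ (core_mono (min_le_right _ _) hy)⟩⟩

/-- In the hybrid topology, every open set containing `x` contains a core at `x`. -/
lemma core_nhds (hcov : Is4Cover A₁ A₂ A₃ A₄) {U : Set ℝ}
    (hU : GenerateOpen (hybGen A₁ A₂ A₃ A₄) U) {x : ℝ} (hx : x ∈ U) :
    ∃ ε : ℝ, 0 < ε ∧ core A₂ A₃ A₄ x ε ⊆ U := by
  obtain ⟨s, hs, hxs, hsub⟩ := generateOpen_basis (hybGen_cover hcov) (hybGen_inter hcov) hU x hx
  obtain ⟨ε, hε, hcore⟩ := exists_core_subset hcov hs hxs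
  exact ⟨ε, hε, hcore.trans hsub⟩

/-- Euclidean open intervals are hybrid-open. -/
lemma generateOpen_Ioo (hcov : Is4Cover A₁ A₂ A₃ A₄) (a b : ℝ) :
    GenerateOpen (hybGen A₁ A₂ A₃ A₄) (Set.Ioo a b) := by
  apply generateOpen_of_pointwise
  intro x hx
  obtain ⟨h1, h2⟩ := hx
  refine ⟨core A₂ A₃ A₄ x (min (x - a) (b - x)),
    .basic _ (core_mem_hybGen hcov (by simp [h1, h2, sub_pos])),
    mem_core (by simp [h1, h2, sub_pos]), ?_⟩
  intro y hy
  have := core_subset_Ioo (A₂ := A₂) (A₃ := A₃) (A₄ := A₄) (x := x)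
    (by simp [h1, h2, sub_pos] : (0:ℝ) < min (x - a) (b - x)) le_rfl hy
  obtain ⟨hy1, hy2⟩ := this
  have l1 : min (x - a) (b - x) ≤ x - a := min_le_left _ _
  have l2 : min (x - a) (b - x) ≤ b - x := min_le_right _ _
  exact ⟨by linarith, by linarith⟩

end HybSide

section Main

open TopologicalSpace

variable {A₁ A₂ A₃ A₄ : Set ℝ} {ρ : ℝ → ℝ → ℝ}

/-- The set of points whose `(1/2)^n`-ball lies to the right. -/
def Tset (ρ : ℝ → ℝ → ℝ) (n : ℕ) : Set ℝ := {x | ∀ y, ρ x y < (1/2:ℝ)^n → x ≤ y}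

def Theta (ρ : ℝ → ℝ → ℝ) (n m : ℕ) : Set ℝ :=
  ⋃ x ∈ Tset ρ n, ({y | ρ x y < (1/2:ℝ)^(n+1)} ∩ Set.Ioo (x - (1/2:ℝ)^m) (x + (1/2:ℝ)^m))

lemma half_pow_pos (n : ℕ) : (0:ℝ) < (1/2:ℝ)^n := by positivity

lemma half_lt_one : (1/2:ℝ) < 1 := by norm_num

variable (hcov : Is4Cover A₁ A₂ A₃ A₄) (hρ : IsQuasiMetric' ρ)
  (hIff : ∀ U, GenerateOpen (hybGen A₁ A₂ A₃ A₄) U ↔ GenerateOpen (ballGen ρ) U)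

lemma lemN1 (hcov : Is4Cover A₁ A₂ A₃ A₄)
    (hIff : ∀ U, GenerateOpen (hybGen A₁ A₂ A₃ A₄) U ↔ GenerateOpen (ballGen ρ) U)
    (hρ : IsQuasiMetric' ρ) (x r : ℝ) (hr : 0 < r) :
    ∃ ε : ℝ, 0 < ε ∧ core A₂ A₃ A₄ x ε ⊆ {y | ρ x y < r} := by
  have hb : GenerateOpen (hybGen A₁ A₂ A₃ A₄) {y | ρ x y < r} :=
    (hIff _).mpr (.basic _ ⟨x, r, hr, rfl⟩)
  exact core_nhds hcov hb (by simp [rho_self hρ, hr])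

lemma lemN2 (hcov : Is4Cover A₁ A₂ A₃ A₄)
    (hIff : ∀ U, GenerateOpen (hybGen A₁ A₂ A₃ A₄) U ↔ GenerateOpen (ballGen ρ) U)
    (hρ : IsQuasiMetric' ρ) (x ε : ℝ) (hε : 0 < ε) :
    ∃ r : ℝ, 0 < r ∧ {y | ρ x y < r} ⊆ core A₂ A₃ A₄ x ε := by
  have hb : GenerateOpen (ballGen ρ) (core A₂ A₃ A₄ x ε) :=
    (hIff _).mp (.basic _ (core_mem_hybGen hcov hε))
  exact ball_nhds hρ hb (mem_core hε)

lemma T_subset23 (hcov : Is4Cover A₁ A₂ A₃ A₄)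
    (hIff : ∀ U, GenerateOpen (hybGen A₁ A₂ A₃ A₄) U ↔ GenerateOpen (ballGen ρ) U)
    (hρ : IsQuasiMetric' ρ) (n : ℕ) : Tset ρ n ⊆ A₂ ∪ A₃ := by
  intro x hx
  by_contra hmem
  rw [mem_union, not_or] at hmem
  obtain ⟨hx2, hx3⟩ := hmem
  obtain ⟨ε, hε, hsub⟩ := lemN1 hcov hIff hρ x ((1/2:ℝ)^n) (half_pow_pos n)
  have hmem2 : x - ε/2 ∈ core A₂ A₃ A₄ x ε := by
    unfold core
    rw [if_neg hx2, if_neg hx3]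
    split_ifs with h4
    · exact ⟨by linarith, by linarith⟩
    · exact ⟨by linarith, by linarith⟩
  have := hx _ (hsub hmem2)
  linarith

lemma union_T (hcov : Is4Cover A₁ A₂ A₃ A₄)
    (hIff : ∀ U, GenerateOpen (hybGen A₁ A₂ A₃ A₄) U ↔ GenerateOpen (ballGen ρ) U)
    (hρ : IsQuasiMetric' ρ) : A₂ ∪ A₃ = ⋃ n, Tset ρ n := by
  apply Subset.antisymm
  · intro x hx
    have hcore : ∃ ε : ℝ, 0 < ε ∧ core A₂ A₃ A₄ x ε ⊆ Set.Ici x := by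
      rcases hx with hx2 | hx3
      · refine ⟨1, one_pos, ?_⟩
        have hcx : core A₂ A₃ A₄ x 1 = {x} := by unfold core; rw [if_pos hx2]
        rw [hcx]
        intro y hy
        rw [mem_singleton_iff] at hy
        exact hy ▸ le_refl x
      · have hx2 : x ∉ A₂ := fun h => hcov.2.2.2.2.1.ne_of_mem h hx3 rfl
        refine ⟨1, one_pos, ?_⟩
        have : core A₂ A₃ A₄ x 1 = Set.Ico x (x + 1) := by
          unfold core; rw [if_neg hx2, if_pos hx3]
        rw [this]
        exact fun y hy => hy.1
    obtain ⟨ε, hε, hsub⟩ := hcore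
    obtain ⟨r, hr, hball⟩ := lemN2 hcov hIff hρ x ε hε
    obtain ⟨n, hn⟩ := exists_pow_lt_of_lt_one hr half_lt_one
    refine mem_iUnion.mpr ⟨n, fun y hy => ?_⟩
    exact hsub (hball (show ρ x y < r from lt_trans hy hn))
  · exact iUnion_subset fun n => T_subset23 hcov hIff hρ n

lemma theta_open (hcov : Is4Cover A₁ A₂ A₃ A₄)
    (hIff : ∀ U, GenerateOpen (hybGen A₁ A₂ A₃ A₄) U ↔ GenerateOpen (ballGen ρ) U)
    (n m : ℕ) : GenerateOpen (hybGen A₁ A₂ A₃ A₄) (Theta ρ n m) := by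
  apply generateOpen_of_pointwise
  intro y hy
  rw [Theta, mem_iUnion₂] at hy
  obtain ⟨x, hxT, hyx⟩ := hy
  refine ⟨{y | ρ x y < (1/2:ℝ)^(n+1)} ∩ Set.Ioo (x - (1/2:ℝ)^m) (x + (1/2:ℝ)^m),
    .inter _ _ ((hIff _).mpr (.basic _ ⟨x, _, half_pow_pos (n+1), rfl⟩))
      (generateOpen_Ioo hcov _ _), hyx, ?_⟩
  intro w hw
  rw [Theta, mem_iUnion₂]
  exact ⟨x, hxT, hw⟩

lemma T_subset_Theta (hρ : IsQuasiMetric' ρ) (n m : ℕ) : Tset ρ n ⊆ Theta ρ n m := by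
  intro x hx
  rw [Theta, mem_iUnion₂]
  refine ⟨x, hx, by simp [rho_self hρ, half_pow_pos], ?_, ?_⟩ <;>
    linarith [half_pow_pos m]

lemma iInter_Theta_subset (hρ : IsQuasiMetric' ρ) (n : ℕ) :
    (⋂ m, Theta ρ n m) ⊆ Tset ρ (n+1) := by
  intro x hx y hy
  by_contra hxy
  push_neg at hxy
  obtain ⟨m, hm⟩ := exists_pow_lt_of_lt_one (show (0:ℝ) < x - y by linarith) half_lt_one
  have hx' := mem_iInter.mp hx m
  rw [Theta, mem_iUnion₂] at hx'
  obtain ⟨z, hzT, hz1, hz2⟩ := hx'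
  simp only [mem_setOf_eq] at hz1
  have hzy : ρ z y ≤ ρ z x + ρ x y := hρ.2.2 _ _ _
  have hsum : (1/2:ℝ)^(n+1) + (1/2:ℝ)^(n+1) = (1/2:ℝ)^n := by
    rw [pow_succ]; ring
  have : ρ z y < (1/2:ℝ)^n := by
    rw [← hsum]; linarith
  have hzley := hzT y this
  have : x - (1/2:ℝ)^m < z := by
    have := hz2.2
    linarith
  linarith

end Main

section BadSet

open TopologicalSpace

variable {A₁ A₂ A₃ A₄ : Set ℝ}

/-- Every hybrid-open set is its euclidean interior together with part of `A₂`
and a countable set. -/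
lemma bad_of_open (hcov : Is4Cover A₁ A₂ A₃ A₄) {U : Set ℝ}
    (hU : GenerateOpen (hybGen A₁ A₂ A₃ A₄) U) :
    ∃ C : Set ℝ, C.Countable ∧ ∀ x ∈ U, x ∉ interior U → x ∈ A₂ ∨ x ∈ C := by
  set R : ℕ → Set ℝ := fun k => {x | Set.Ico x (x + (1/2:ℝ)^k) ⊆ U ∧ x ∉ interior U} with hR
  set L : ℕ → Set ℝ := fun k => {x | Set.Ioc (x - (1/2:ℝ)^k) x ⊆ U ∧ x ∉ interior U} with hL
  have hRc : ∀ k, (R k).Countable := by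
    intro k
    apply countable_of_separated (half_pow_pos k)
    intro x hx y hy hxy
    by_contra hcon
    push_neg at hcon
    apply hy.2
    have hsub : Set.Ioo x (y + (1/2:ℝ)^k) ⊆ U := by
      intro z hz
      rcases lt_or_ge z (x + (1/2:ℝ)^k) with h | h
      · exact hx.1 ⟨le_of_lt hz.1, h⟩
      · exact hy.1 ⟨by linarith [hz.1], hz.2⟩
    exact mem_interior.mpr ⟨Set.Ioo x (y + (1/2:ℝ)^k), hsub, isOpen_Ioo,
      ⟨hxy, by linarith [half_pow_pos k]⟩⟩
  have hLc : ∀ k, (L k).Countable := by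
    intro k
    apply countable_of_separated (half_pow_pos k)
    intro x hx y hy hxy
    by_contra hcon
    push_neg at hcon
    apply hx.2
    have hsub : Set.Ioo (x - (1/2:ℝ)^k) y ⊆ U := by
      intro z hz
      rcases lt_or_ge (y - (1/2:ℝ)^k) z with h | h
      · exact hy.1 ⟨h, le_of_lt hz.2⟩
      · exact hx.1 ⟨hz.1, by linarith⟩
    exact mem_interior.mpr ⟨Set.Ioo (x - (1/2:ℝ)^k) y, hsub, isOpen_Ioo,
      ⟨by linarith [half_pow_pos k], hxy⟩⟩
  refine ⟨(⋃ k, R k) ∪ ⋃ k, L k,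
    ((Set.countable_iUnion hRc).union (Set.countable_iUnion hLc)), ?_⟩
  intro x hxU hxI
  by_cases hx2 : x ∈ A₂
  · exact Or.inl hx2
  right
  obtain ⟨ε, hε, hsub⟩ := core_nhds hcov hU hxU
  by_cases hx3 : x ∈ A₃
  · left
    obtain ⟨k, hk⟩ := exists_pow_lt_of_lt_one hε half_lt_one
    refine mem_iUnion.mpr ⟨k, ?_, hxI⟩
    have hccore : core A₂ A₃ A₄ x ε = Set.Ico x (x + ε) := by
      unfold core; rw [if_neg hx2, if_pos hx3]
    intro z hz
    exact hsub (hccore ▸ ⟨hz.1, by have := hz.2; linarith⟩)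
  by_cases hx4 : x ∈ A₄
  · right
    obtain ⟨k, hk⟩ := exists_pow_lt_of_lt_one hε half_lt_one
    refine mem_iUnion.mpr ⟨k, ?_, hxI⟩
    have hccore : core A₂ A₃ A₄ x ε = Set.Ioc (x - ε) x := by
      unfold core; rw [if_neg hx2, if_neg hx3, if_pos hx4]
    intro z hz
    exact hsub (hccore ▸ ⟨by have := hz.1; linarith, hz.2⟩)
  · exfalso
    apply hxI
    have hccore : core A₂ A₃ A₄ x ε = Set.Ioo (x - ε) (x + ε) := by
      unfold core; rw [if_neg hx2, if_neg hx3, if_neg hx4]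
    exact mem_interior.mpr ⟨Set.Ioo (x - ε) (x + ε), hccore ▸ hsub, isOpen_Ioo,
      ⟨by linarith, by linarith⟩⟩

end BadSet

section Plumbing

lemma iInter_ball_eq_singleton (x : ℝ) :
    ⋂ m : ℕ, Metric.ball x ((1/2:ℝ)^m) = {x} := by
  ext y
  simp only [mem_iInter, Metric.mem_ball, mem_singleton_iff]
  constructor
  · intro h
    by_contra hne
    obtain ⟨m, hm⟩ := exists_pow_lt_of_lt_one (dist_pos.mpr hne) half_lt_one
    exact absurd (h m) (not_lt.mpr hm.le)
  · rintro rfl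
    intro m
    simpa using half_pow_pos m

lemma iInter_finset_range (g : ℕ → Set ℝ) :
    ⋂ m : ℕ, ⋂ j ∈ Finset.range (m+1), g j = ⋂ j, g j := by
  ext x
  simp only [mem_iInter, Finset.mem_range, Nat.lt_succ_iff]
  exact ⟨fun h j => h j j le_rfl, fun h m j _ => h j⟩

end Plumbing

section Key

open TopologicalSpace

lemma hybridTop_eq (A₁ A₂ A₃ A₄ : Set ℝ) :
    hybridTop A₁ A₂ A₃ A₄ = generateFrom (hybGen A₁ A₂ A₃ A₄) := rfl

lemma quasiMetricTop_eq (ρ : ℝ → ℝ → ℝ) :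
    quasiMetricTop ρ = generateFrom (ballGen ρ) := rfl

lemma generateOpen_congr {α : Type*} {g₁ g₂ : Set (Set α)}
    (h : generateFrom g₁ = generateFrom g₂) (U : Set α) :
    GenerateOpen g₁ U ↔ GenerateOpen g₂ U := by
  constructor <;> intro hU
  · have h1 : @IsOpen _ (generateFrom g₁) U := hU
    rw [h] at h1
    exact h1
  · have h1 : @IsOpen _ (generateFrom g₂) U := hU
    rw [← h] at h1
    exact h1

/-- Main lemma: quasi-metrizability of the hybrid topology forces `A₃`
to be of type `G_δσ`. -/
lemma key_A₃_Gδσ (A₁ A₂ A₃ A₄ : Set ℝ) (hcov : Is4Cover A₁ A₂ A₃ A₄)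
    (h2 : ∃ C : ℕ → Set ℝ, (∀ n, IsClosed (C n)) ∧ A₂ = ⋃ n, C n)
    (hqm : QuasiMetrizableTop (hybridTop A₁ A₂ A₃ A₄)) :
    ∃ G : ℕ → ℕ → Set ℝ, (∀ n m, IsOpen (G n m)) ∧ A₃ = ⋃ n, ⋂ m, G n m := by
  classical
  obtain ⟨C₂, hC₂closed, hA₂⟩ := h2
  obtain ⟨ρ, hρ₀, hEq⟩ := hqm
  have hρ : IsQuasiMetric' ρ := hρ₀
  have hIff : ∀ U, GenerateOpen (hybGen A₁ A₂ A₃ A₄) U ↔ GenerateOpen (ballGen ρ) U :=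
    generateOpen_congr ((hybridTop_eq A₁ A₂ A₃ A₄).symm.trans (hEq.trans (quasiMetricTop_eq ρ)))
  -- the countable "bad" sets of the Θ's
  choose C hCcount hCdich using fun n m : ℕ =>
    bad_of_open hcov (theta_open hcov hIff n m)
  -- the countable exceptional subset of A₃
  set D : Set ℝ := A₃ ∩ ⋃ n, ⋃ m, C n m with hD
  have hDc : D.Countable :=
    ((Set.countable_iUnion fun n => Set.countable_iUnion fun m => hCcount n m)).mono
      inter_subset_right |>.mono subset_rfl
  have hDsub : D ⊆ A₃ := inter_subset_left
  -- even pieces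
  set E : ℕ → ℕ → Set ℝ := fun n m =>
    (⋂ j ∈ Finset.range (m+1), interior (Theta ρ n j)) ∩
    (⋂ j ∈ Finset.range (m+1), (C₂ j)ᶜ) with hE
  have hEopen : ∀ n m, IsOpen (E n m) := by
    intro n m
    refine IsOpen.inter (isOpen_biInter_finset fun j _ => isOpen_interior)
      (isOpen_biInter_finset fun j _ => (hC₂closed j).isOpen_compl)
  have hEInter : ∀ n, (⋂ m, E n m) =
      (⋂ j, interior (Theta ρ n j)) ∩ (⋂ j, (C₂ j)ᶜ) := by
    intro n
    rw [hE]
    rw [Set.iInter_inter_distrib, iInter_finset_range, iInter_finset_range]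
  have hEsub : ∀ n, (⋂ m, E n m) ⊆ A₃ := by
    intro n x hx
    rw [hEInter n] at hx
    obtain ⟨hx1, hx2⟩ := hx
    have hxT : x ∈ Tset ρ (n+1) := by
      apply iInter_Theta_subset hρ n
      exact mem_iInter.mpr fun m => interior_subset (mem_iInter.mp hx1 m)
    have hx23 : x ∈ A₂ ∪ A₃ := T_subset23 hcov hIff hρ (n+1) hxT
    have hxA2 : x ∉ A₂ := by
      intro hx2'
      rw [hA₂] at hx2'
      obtain ⟨j, hj⟩ := mem_iUnion.mp hx2'
      exact (mem_iInter.mp hx2 j) hj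
    exact hx23.resolve_left hxA2
  have hQ := union_T hcov hIff hρ
  -- main dichotomy: every point of A₃ is in D or in some ⋂ m, E n m
  have hmain : ∀ x ∈ A₃, x ∈ D ∨ ∃ n, x ∈ ⋂ m, E n m := by
    intro x hx3
    have hxA2 : x ∉ A₂ := fun h => hcov.2.2.2.2.1.ne_of_mem h hx3 rfl
    by_cases hxD : x ∈ D
    · exact Or.inl hxD
    right
    have hxQ : x ∈ ⋃ n, Tset ρ n := hQ ▸ Or.inr hx3
    obtain ⟨n, hxT⟩ := mem_iUnion.mp hxQ
    refine ⟨n, mem_iInter.mpr fun m => ?_⟩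
    rw [hE]
    constructor
    · refine mem_iInter₂.mpr fun j _ => ?_
      have hxTh : x ∈ Theta ρ n j := T_subset_Theta hρ n j hxT
      by_contra hni
      rcases hCdich n j x hxTh hni with h | h
      · exact hxA2 h
      · exact hxD ⟨hx3, mem_iUnion.mpr ⟨n, mem_iUnion.mpr ⟨j, h⟩⟩⟩
    · refine mem_iInter₂.mpr fun j _ => ?_
      intro hj
      exact hxA2 (hA₂ ▸ mem_iUnion.mpr ⟨j, hj⟩)
  -- assemble
  rcases D.eq_empty_or_nonempty with hDe | hDne
  · refine ⟨fun n m => E n m, fun n m => hEopen n m, ?_⟩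
    apply Subset.antisymm
    · intro x hx3
      rcases hmain x hx3 with hxD | ⟨n, hn⟩
      · rw [hDe] at hxD; exact absurd hxD (notMem_empty x)
      · exact mem_iUnion.mpr ⟨n, hn⟩
    · exact iUnion_subset fun n => hEsub n
  · obtain ⟨f, hf⟩ := hDc.exists_eq_range hDne
    refine ⟨fun i m => if i % 2 = 0 then E (i/2) m else Metric.ball (f (i/2)) ((1/2:ℝ)^m),
      fun i m => ?_, ?_⟩
    · dsimp only
      by_cases h : i % 2 = 0
      · rw [if_pos h]; exact hEopen _ _
      · rw [if_neg h]; exact Metric.isOpen_ball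
    apply Subset.antisymm
    · intro x hx3
      rcases hmain x hx3 with hxD | ⟨n, hn⟩
      · have : x ∈ range f := hf ▸ hxD
        obtain ⟨j, hj⟩ := this
        refine mem_iUnion.mpr ⟨2*j+1, mem_iInter.mpr fun m => ?_⟩
        have hodd : (2*j+1) % 2 ≠ 0 := by omega
        dsimp only
        rw [if_neg hodd]
        have hdiv : (2*j+1)/2 = j := by omega
        rw [hdiv, hj]
        exact Metric.mem_ball_self (half_pow_pos m)
      · refine mem_iUnion.mpr ⟨2*n, mem_iInter.mpr fun m => ?_⟩
        have heven : (2*n) % 2 = 0 := by omega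
        have hdiv : (2*n)/2 = n := by omega
        dsimp only
        rw [if_pos heven, hdiv]
        exact mem_iInter.mp hn m
    · refine iUnion_subset fun i => ?_
      by_cases h : i % 2 = 0
      · intro x hx
        refine hEsub (i/2) (mem_iInter.mpr fun m => ?_)
        have := mem_iInter.mp hx m
        dsimp only at this
        rwa [if_pos h] at this
      · intro x hx
        have hx' : x ∈ ⋂ m : ℕ, Metric.ball (f (i/2)) ((1/2:ℝ)^m) := by
          refine mem_iInter.mpr fun m => ?_
          have := mem_iInter.mp hx m
          dsimp only at this
          rwa [if_neg h] at this
        rw [iInter_ball_eq_singleton] at hx'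
        rw [mem_singleton_iff] at hx'
        subst hx'
        exact hDsub (hf ▸ mem_range_self _)

end Key

section Reflect

open TopologicalSpace

lemma preimage_neg_hybGen (A₁ A₂ A₃ A₄ : Set ℝ) :
    (Set.preimage (fun x : ℝ => -x)) '' hybGen A₁ A₂ A₃ A₄ =
      hybGen ((fun x : ℝ => -x) ⁻¹' A₁) ((fun x : ℝ => -x) ⁻¹' A₂)
        ((fun x : ℝ => -x) ⁻¹' A₄) ((fun x : ℝ => -x) ⁻¹' A₃) := by
  ext s
  constructor
  · rintro ⟨t, ht, rfl⟩
    rcases ht with ((⟨a, ha, ε, hε, rfl⟩ | ⟨a, ha, rfl⟩) | ⟨a, ha, ε, hε, rfl⟩) | ⟨a, ha, ε, hε, rfl⟩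
    · refine Or.inl (Or.inl (Or.inl ⟨-a, by simpa using ha, ε, hε, ?_⟩))
      ext y
      simp only [mem_preimage, mem_Ioo]
      constructor <;> rintro ⟨h1, h2⟩ <;> constructor <;> linarith
    · refine Or.inl (Or.inl (Or.inr ⟨-a, by simpa using ha, ?_⟩))
      ext y
      simp only [mem_preimage, mem_singleton_iff]
      constructor <;> intro h <;> linarith
    · refine Or.inr ⟨-a, by simpa using ha, ε, hε, ?_⟩
      ext y
      simp only [mem_preimage, mem_Ico, mem_Ioc]
      constructor <;> rintro ⟨h1, h2⟩ <;> constructor <;> linarith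
    · refine Or.inl (Or.inr ⟨-a, by simpa using ha, ε, hε, ?_⟩)
      ext y
      simp only [mem_preimage, mem_Ioc, mem_Ico]
      constructor <;> rintro ⟨h1, h2⟩ <;> constructor <;> linarith
  · rintro (((⟨b, hb, ε, hε, rfl⟩ | ⟨b, hb, rfl⟩) | ⟨b, hb, ε, hε, rfl⟩) | ⟨b, hb, ε, hε, rfl⟩)
    · refine ⟨Set.Ioo ((-b) - ε) ((-b) + ε), Or.inl (Or.inl (Or.inl ⟨-b, hb, ε, hε, rfl⟩)), ?_⟩
      ext y
      simp only [mem_preimage, mem_Ioo]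
      constructor <;> rintro ⟨h1, h2⟩ <;> constructor <;> linarith
    · refine ⟨{-b}, Or.inl (Or.inl (Or.inr ⟨-b, hb, rfl⟩)), ?_⟩
      ext y
      simp only [mem_preimage, mem_singleton_iff]
      constructor <;> intro h <;> linarith
    · -- s = Ico b (b+ε), b ∈ N⁻¹' A₄
      refine ⟨Set.Ioc ((-b) - ε) (-b), Or.inr ⟨-b, hb, ε, hε, rfl⟩, ?_⟩
      ext y
      simp only [mem_preimage, mem_Ioc, mem_Ico]
      constructor <;> rintro ⟨h1, h2⟩ <;> constructor <;> linarith
    · -- s = Ioc (b-ε) b, b ∈ N⁻¹' A₃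
      refine ⟨Set.Ico (-b) ((-b) + ε), Or.inl (Or.inr ⟨-b, hb, ε, hε, rfl⟩), ?_⟩
      ext y
      simp only [mem_preimage, mem_Ico, mem_Ioc]
      constructor <;> rintro ⟨h1, h2⟩ <;> constructor <;> linarith

lemma hybrid_reflect (A₁ A₂ A₃ A₄ : Set ℝ) :
    hybridTop ((fun x : ℝ => -x) ⁻¹' A₁) ((fun x : ℝ => -x) ⁻¹' A₂)
      ((fun x : ℝ => -x) ⁻¹' A₄) ((fun x : ℝ => -x) ⁻¹' A₃) =
    TopologicalSpace.induced (fun x : ℝ => -x) (hybridTop A₁ A₂ A₃ A₄) := by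
  rw [hybridTop_eq, hybridTop_eq, induced_generateFrom_eq, preimage_neg_hybGen]

lemma ballGen_reflect (ρ : ℝ → ℝ → ℝ) :
    (Set.preimage (fun x : ℝ => -x)) '' ballGen ρ = ballGen (fun x y => ρ (-x) (-y)) := by
  ext s
  constructor
  · rintro ⟨t, ⟨z, r, hr, rfl⟩, rfl⟩
    refine ⟨-z, r, hr, ?_⟩
    ext y
    simp [neg_neg]
  · rintro ⟨w, r, hr, rfl⟩
    refine ⟨{y : ℝ | ρ (-w) y < r}, ⟨-w, r, hr, rfl⟩, ?_⟩
    ext y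
    simp

lemma quasi_reflect (ρ : ℝ → ℝ → ℝ) :
    quasiMetricTop (fun x y => ρ (-x) (-y)) =
      TopologicalSpace.induced (fun x : ℝ => -x) (quasiMetricTop ρ) := by
  rw [quasiMetricTop_eq, quasiMetricTop_eq, induced_generateFrom_eq, ballGen_reflect]

end Reflect

theorem hybrid_not_quasiMetrizable'
    (A₁ A₂ A₃ A₄ : Set ℝ) (hcov : Is4Cover A₁ A₂ A₃ A₄)
    (h2 : ∃ C : ℕ → Set ℝ, (∀ n, IsClosed (C n)) ∧ A₂ = ⋃ n, C n)
    (h34 : ¬(∃ G : ℕ → ℕ → Set ℝ, (∀ n m, IsOpen (G n m)) ∧ A₃ = ⋃ n, ⋂ m, G n m) ∨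
           ¬(∃ G : ℕ → ℕ → Set ℝ, (∀ n m, IsOpen (G n m)) ∧ A₄ = ⋃ n, ⋂ m, G n m)) :
    ¬ QuasiMetrizableTop (hybridTop A₁ A₂ A₃ A₄) := by
  intro hqm
  rcases h34 with h3 | h4
  · exact h3 (key_A₃_Gδσ A₁ A₂ A₃ A₄ hcov h2 hqm)
  apply h4
  obtain ⟨ρ, hρ, hEq⟩ := hqm
  obtain ⟨hu, d12, d13, d14, d23, d24, d34⟩ := hcov
  set N : ℝ → ℝ := fun x => -x with hN
  have hcov' : Is4Cover (N ⁻¹' A₁) (N ⁻¹' A₂) (N ⁻¹' A₄) (N ⁻¹' A₃) := by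
    refine ⟨?_, d12.preimage N, d14.preimage N, d13.preimage N,
      (d24.preimage N), (d23.preimage N), (d34.symm.preimage N)⟩
    ext x
    simp only [mem_union, mem_preimage, mem_univ, iff_true]
    have hx : N x ∈ A₁ ∪ A₂ ∪ A₃ ∪ A₄ := hu ▸ mem_univ (N x)
    rcases hx with ((h | h) | h) | h
    · exact Or.inl (Or.inl (Or.inl h))
    · exact Or.inl (Or.inl (Or.inr h))
    · exact Or.inr h
    · exact Or.inl (Or.inr h)
  have h2' : ∃ C : ℕ → Set ℝ, (∀ n, IsClosed (C n)) ∧ N ⁻¹' A₂ = ⋃ n, C n := by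
    obtain ⟨C, hCc, hCe⟩ := h2
    exact ⟨fun n => N ⁻¹' C n, fun n => (hCc n).preimage continuous_neg,
      by rw [hCe, preimage_iUnion]⟩
  have hρ' : IsQuasiMetric (fun x y : ℝ => ρ (-x) (-y)) := by
    refine ⟨fun x y => hρ.1 _ _, fun x y => ?_, fun x y z => hρ.2.2 _ _ _⟩
    rw [hρ.2.1]
    constructor
    · intro h; linarith [neg_injective h]
    · rintro rfl; rfl
  have hqm' : QuasiMetrizableTop (hybridTop (N ⁻¹' A₁) (N ⁻¹' A₂) (N ⁻¹' A₄) (N ⁻¹' A₃)) := by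
    refine ⟨fun x y => ρ (-x) (-y), hρ', ?_⟩
    rw [hybrid_reflect, hEq, quasi_reflect]
  obtain ⟨G, hGopen, hGeq⟩ := key_A₃_Gδσ _ _ _ _ hcov' h2' hqm'
  refine ⟨fun n m => N ⁻¹' (G n m), fun n m => (hGopen n m).preimage continuous_neg, ?_⟩
  have hNN : N ⁻¹' (N ⁻¹' A₄) = A₄ := by
    ext x
    simp [hN]
  calc A₄ = N ⁻¹' (N ⁻¹' A₄) := hNN.symm
  _ = N ⁻¹' (⋃ n, ⋂ m, G n m) := by rw [hGeq]
  _ = ⋃ n, ⋂ m, N ⁻¹' (G n m) := by rw [preimage_iUnion]; simp [preimage_iInter]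

/-- **Corollary 2.13.** If `A₂` is of type `F_σ` in the euclidean topology but
`A₃` or `A₄` is not of type `G_δσ` in the euclidean topology, then `H₄(𝒜)` is not
quasi-metrizable. -/
theorem hybrid_not_quasiMetrizable
    (A₁ A₂ A₃ A₄ : Set ℝ) (hcov : Is4Cover A₁ A₂ A₃ A₄)
    (h2 : ∃ C : ℕ → Set ℝ, (∀ n, IsClosed (C n)) ∧ A₂ = ⋃ n, C n)
    (h34 : ¬(∃ G : ℕ → ℕ → Set ℝ, (∀ n m, IsOpen (G n m)) ∧ A₃ = ⋃ n, ⋂ m, G n m) ∨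
           ¬(∃ G : ℕ → ℕ → Set ℝ, (∀ n m, IsOpen (G n m)) ∧ A₄ = ⋃ n, ⋂ m, G n m)) :
    ¬ QuasiMetrizableTop (hybridTop A₁ A₂ A₃ A₄) := by
  exact hybrid_not_quasiMetrizable' A₁ A₂ A₃ A₄ hcov h2 h34
end

section
/- Let 𝒜 = {A₁, A₂, A₃, A₄} be a 4-cover of ℝ such that A₂ is of type F_σ in the euclidean topology on ℝ (a countable union of euclidean-closed sets) and A₃ ∪ A₄ is countable. Then the hybrid space H₄(𝒜) is metrizable. -/
open Set

open Topology TopologicalSpace Function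

/-!
Write `A₂ = ⋃ n, C n` with every `C n` closed. The map sending `x` to `x`, to the family
(over `n`) of "`x` if `x ∈ C n`, a fresh point otherwise" in a discrete space, and to the
truth values of `d ≤ x` (`d ∈ A₃`) and `d < x` (`d ∈ A₄`), lands in a countable product of
metrizable spaces. It is continuous for the hybrid topology: every `C n` is euclidean-closed
and consists of isolated points, `[d, ∞)` is open for `d ∈ A₃` and `(-∞, d]` for `d ∈ A₄`.
It is an embedding, since every basic open set of `H₄(𝒜)` is cut out by the euclidean
coordinate and at most one further coordinate.
-/

open Classical in
noncomputable def isolatingCoord (C : Set ℝ) (x : ℝ) : WithDiscreteTopology (Option ℝ) :=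
  WithTopology.toTopology ⊥ (if x ∈ C then some x else none)

theorem isolatingCoord_preimage_some {C : Set ℝ} {x : ℝ} (hx : x ∈ C) :
    isolatingCoord C ⁻¹' {WithTopology.toTopology ⊥ (some x)} = {x} := by
  ext y
  by_cases hy : y ∈ C
  · simp [isolatingCoord, hy]
  · simpa [isolatingCoord, hy] using fun h : y = x => hy (h ▸ hx)

noncomputable def hybridCoords (C : ℕ → Set ℝ) (A₃ A₄ : Set ℝ) (x : ℝ) :
    (ℕ → WithDiscreteTopology (Option ℝ)) × (A₃ → Bool) × (A₄ → Bool) :=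
  (fun n => isolatingCoord (C n) x, fun d => (Ici (d : ℝ)).boolIndicator x,
    fun d => (Ioi (d : ℝ)).boolIndicator x)

section HybridTop

variable {A₁ A₂ A₃ A₄ : Set ℝ}

theorem isOpen_hybridTop_Ioo {x ε : ℝ} (hx : x ∈ A₁) (hε : 0 < ε) :
    IsOpen[hybridTop A₁ A₂ A₃ A₄] (Ioo (x - ε) (x + ε)) :=
  isOpen_generateFrom_of_mem (.inl (.inl (.inl ⟨x, hx, ε, hε, rfl⟩)))

theorem isOpen_hybridTop_singleton {x : ℝ} (hx : x ∈ A₂) :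
    IsOpen[hybridTop A₁ A₂ A₃ A₄] {x} :=
  isOpen_generateFrom_of_mem (.inl (.inl (.inr ⟨x, hx, rfl⟩)))

theorem isOpen_hybridTop_Ico {x ε : ℝ} (hx : x ∈ A₃) (hε : 0 < ε) :
    IsOpen[hybridTop A₁ A₂ A₃ A₄] (Ico x (x + ε)) :=
  isOpen_generateFrom_of_mem (.inl (.inr ⟨x, hx, ε, hε, rfl⟩))

theorem isOpen_hybridTop_Ioc {x ε : ℝ} (hx : x ∈ A₄) (hε : 0 < ε) :
    IsOpen[hybridTop A₁ A₂ A₃ A₄] (Ioc (x - ε) x) :=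
  isOpen_generateFrom_of_mem (.inr ⟨x, hx, ε, hε, rfl⟩)

theorem isOpen_hybridTop_of_subset {V : Set ℝ} (hV : V ⊆ A₂) :
    IsOpen[hybridTop A₁ A₂ A₃ A₄] V := by
  let _ := hybridTop A₁ A₂ A₃ A₄
  rw [← biUnion_of_singleton V]
  exact isOpen_biUnion fun x hx => isOpen_hybridTop_singleton (hV hx)

theorem hybridTop_le (hcov : A₁ ∪ A₂ ∪ A₃ ∪ A₄ = univ) :
    hybridTop A₁ A₂ A₃ A₄ ≤ (inferInstance : TopologicalSpace ℝ) := by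
  refine TopologicalSpace.le_def.2 fun U hU => ?_
  let _ := hybridTop A₁ A₂ A₃ A₄
  refine isOpen_iff_forall_mem_open.2 fun x hxU => ?_
  obtain ⟨ε, hε, hball⟩ := Metric.isOpen_iff.1 hU x hxU
  rw [Real.ball_eq_Ioo] at hball
  have hx : x ∈ A₁ ∪ A₂ ∪ A₃ ∪ A₄ := hcov ▸ mem_univ x
  rcases hx with ((hx | hx) | hx) | hx
  · exact ⟨_, hball, isOpen_hybridTop_Ioo hx hε, by constructor <;> linarith⟩
  · exact ⟨{x}, singleton_subset_iff.2 hxU, isOpen_hybridTop_singleton hx, rfl⟩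
  · exact ⟨_, (Ico_subset_Ioo_left (by linarith)).trans hball, isOpen_hybridTop_Ico hx hε,
      left_mem_Ico.2 (by linarith)⟩
  · exact ⟨_, (Ioc_subset_Ioo_right (by linarith)).trans hball, isOpen_hybridTop_Ioc hx hε,
      right_mem_Ioc.2 (by linarith)⟩

theorem isOpen_hybridTop_Ici (hcov : A₁ ∪ A₂ ∪ A₃ ∪ A₄ = univ) {d : ℝ} (hd : d ∈ A₃) :
    IsOpen[hybridTop A₁ A₂ A₃ A₄] (Ici d) := by
  -- Euclidean facts are elaborated before the hybrid topology becomes the instance on `ℝ`.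
  have hIoi : IsOpen[hybridTop A₁ A₂ A₃ A₄] (Ioi d) := hybridTop_le hcov _ isOpen_Ioi
  have hIci : Ici d = Ico d (d + 1) ∪ Ioi d := by
    ext x; simp only [mem_Ici, mem_union, mem_Ico, mem_Ioi]; grind
  let _ := hybridTop A₁ A₂ A₃ A₄
  exact hIci ▸ (isOpen_hybridTop_Ico hd one_pos).union hIoi

theorem isOpen_hybridTop_Iic (hcov : A₁ ∪ A₂ ∪ A₃ ∪ A₄ = univ) {d : ℝ} (hd : d ∈ A₄) :
    IsOpen[hybridTop A₁ A₂ A₃ A₄] (Iic d) := by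
  have hIio : IsOpen[hybridTop A₁ A₂ A₃ A₄] (Iio d) := hybridTop_le hcov _ isOpen_Iio
  have hIic : Iic d = Ioc (d - 1) d ∪ Iio d := by
    ext x; simp only [mem_Iic, mem_union, mem_Ioc, mem_Iio]; grind
  let _ := hybridTop A₁ A₂ A₃ A₄
  exact hIic ▸ (isOpen_hybridTop_Ioc hd one_pos).union hIio

theorem continuous_boolIndicator_Ici (hcov : A₁ ∪ A₂ ∪ A₃ ∪ A₄ = univ) {d : ℝ} (hd : d ∈ A₃) :
    Continuous[hybridTop A₁ A₂ A₃ A₄, _] (Ici d).boolIndicator := by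
  have hIio : IsOpen[hybridTop A₁ A₂ A₃ A₄] (Iio d) := hybridTop_le hcov _ isOpen_Iio
  let _ := hybridTop A₁ A₂ A₃ A₄
  exact (continuous_boolIndicator_iff_isClopen _).2
    ⟨isOpen_compl_iff.1 (by rwa [compl_Ici]), isOpen_hybridTop_Ici hcov hd⟩

theorem continuous_boolIndicator_Ioi (hcov : A₁ ∪ A₂ ∪ A₃ ∪ A₄ = univ) {d : ℝ} (hd : d ∈ A₄) :
    Continuous[hybridTop A₁ A₂ A₃ A₄, _] (Ioi d).boolIndicator := by
  have hIoi : IsOpen[hybridTop A₁ A₂ A₃ A₄] (Ioi d) := hybridTop_le hcov _ isOpen_Ioi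
  let _ := hybridTop A₁ A₂ A₃ A₄
  exact (continuous_boolIndicator_iff_isClopen _).2
    ⟨isOpen_compl_iff.1 (by rw [compl_Ioi]; exact isOpen_hybridTop_Iic hcov hd), hIoi⟩

theorem continuous_isolatingCoord (hcov : A₁ ∪ A₂ ∪ A₃ ∪ A₄ = univ) {C : Set ℝ}
    (hC : IsClosed C) (hCA : C ⊆ A₂) :
    Continuous[hybridTop A₁ A₂ A₃ A₄, _] (isolatingCoord C) := by
  have hCc : IsOpen[hybridTop A₁ A₂ A₃ A₄] Cᶜ := hybridTop_le hcov _ hC.isOpen_compl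
  let _ := hybridTop A₁ A₂ A₃ A₄
  refine continuous_discrete_rng.2 fun b => ?_
  cases b with | toTopology b => cases b with
  | none =>
    convert hCc using 1
    ext x
    by_cases hx : x ∈ C <;> simp [isolatingCoord, hx]
  | some a =>
    refine isOpen_hybridTop_of_subset fun x hx => hCA ?_
    by_contra h
    simp [isolatingCoord, h] at hx

theorem continuous_hybridCoords (hcov : A₁ ∪ A₂ ∪ A₃ ∪ A₄ = univ) {C : ℕ → Set ℝ}
    (hC : ∀ n, IsClosed (C n)) (hCA : ∀ n, C n ⊆ A₂) :
    Continuous[hybridTop A₁ A₂ A₃ A₄, _] (hybridCoords C A₃ A₄) := by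
  let _ := hybridTop A₁ A₂ A₃ A₄
  exact (continuous_pi fun n => continuous_isolatingCoord hcov (hC n) (hCA n)).prodMk <|
    (continuous_pi fun d => continuous_boolIndicator_Ici hcov d.2).prodMk
      (continuous_pi fun d => continuous_boolIndicator_Ioi hcov d.2)

theorem hybridTop_eq_induced (hcov : A₁ ∪ A₂ ∪ A₃ ∪ A₄ = univ) {C : ℕ → Set ℝ}
    (hC : ∀ n, IsClosed (C n)) (hA₂ : A₂ = ⋃ n, C n) :
    hybridTop A₁ A₂ A₃ A₄ =
      induced (fun x => (x, hybridCoords C A₃ A₄ x)) inferInstance := by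
  refine le_antisymm (continuous_iff_le_induced.1 ?_) (le_generateFrom ?_)
  · have hCA : ∀ n, C n ⊆ A₂ := fun n => hA₂ ▸ subset_iUnion C n
    -- Explicit instances: the target `ℝ` keeps its euclidean topology.
    exact @Continuous.prodMk ℝ _ ℝ _ _ (hybridTop A₁ A₂ A₃ A₄) _ _
      (continuous_id_of_le (hybridTop_le hcov)) (continuous_hybridCoords hcov hC hCA)
  rintro _ (((⟨x, -, ε, -, rfl⟩ | ⟨x, hx, rfl⟩) | ⟨x, hx, ε, -, rfl⟩) | ⟨x, hx, ε, -, rfl⟩)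
  · exact isOpen_induced (isOpen_Ioo.preimage continuous_fst)
  · obtain ⟨n, hn⟩ := mem_iUnion.1 (hA₂ ▸ hx)
    rw [← isolatingCoord_preimage_some hn]
    exact isOpen_induced ((isOpen_discrete _).preimage
      ((continuous_apply n).comp (continuous_fst.comp continuous_snd)))
  · rw [← Ici_inter_Iio, ← preimage_boolIndicator_true (Ici x)]
    exact isOpen_induced (((isOpen_discrete _).preimage ((continuous_apply (⟨x, hx⟩ : A₃)).comp
      (continuous_fst.comp (continuous_snd.comp continuous_snd)))).inter
        (isOpen_Iio.preimage continuous_fst))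
  · rw [← Ioi_inter_Iic, ← compl_Ioi, ← preimage_boolIndicator_false (Ioi x)]
    exact isOpen_induced ((isOpen_Ioi.preimage continuous_fst).inter
      ((isOpen_discrete _).preimage ((continuous_apply (⟨x, hx⟩ : A₄)).comp
        (continuous_snd.comp (continuous_snd.comp continuous_snd)))))

end HybridTop

theorem exists_metricSpace_toTopologicalSpace_eq_induced {X Y : Type*} [TopologicalSpace Y]
    [MetrizableSpace Y] {f : X → Y} (hf : Injective f) :
    ∃ m : MetricSpace X, m.toUniformSpace.toTopologicalSpace = induced f ‹_› :=
  ⟨.induced f hf (metrizableSpaceMetric Y), UniformSpace.toTopologicalSpace_comap⟩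

/-- **Proposition 2.13.** If `A₂` is euclidean-`F_σ` and `A₃ ∪ A₄` is countable,
then `H₄(𝒜)` is metrizable. -/
theorem hybrid_metrizable_of_Fsigma_countable
    (A₁ A₂ A₃ A₄ : Set ℝ) (hcov : Is4Cover A₁ A₂ A₃ A₄)
    (h2 : ∃ C : ℕ → Set ℝ, (∀ n, IsClosed (C n)) ∧ A₂ = ⋃ n, C n)
    (h34 : (A₃ ∪ A₄).Countable) :
    ∃ m : MetricSpace ℝ, m.toUniformSpace.toTopologicalSpace = hybridTop A₁ A₂ A₃ A₄ := by
  obtain ⟨C, hC, hA₂⟩ := h2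
  have : Countable A₃ := (h34.mono subset_union_left).to_subtype
  have : Countable A₄ := (h34.mono subset_union_right).to_subtype
  obtain ⟨m, hm⟩ := exists_metricSpace_toTopologicalSpace_eq_induced
    (f := fun x => (x, hybridCoords C A₃ A₄ x)) fun _ _ h => congrArg Prod.fst h
  exact ⟨m, hm.trans (hybridTop_eq_induced hcov.1 hC hA₂).symm⟩
end

section
/- For every 4-cover 𝒜 = {A₁, A₂, A₃, A₄} of ℝ, the hybrid space H₄(𝒜) is normal: any two disjoint closed subsets of H₄(𝒜) can be separated by disjoint open sets of H₄(𝒜). -/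
open Set

open scoped Classical in
noncomputable def hybridBall (A₁ A₂ A₃ : Set ℝ) (x r : ℝ) : Set ℝ :=
  if x ∈ A₁ then Set.Ioo (x - r) (x + r)
  else if x ∈ A₂ then {x}
  else if x ∈ A₃ then Set.Ico x (x + r)
  else Set.Ioc (x - r) x

lemma mem_hybridBall_self (A₁ A₂ A₃ : Set ℝ) (x r : ℝ) (hr : 0 < r) :
    x ∈ hybridBall A₁ A₂ A₃ x r := by
  unfold hybridBall
  split_ifs <;>
    simp only [Set.mem_Ioo, Set.mem_Ico, Set.mem_Ioc, Set.mem_singleton_iff] <;>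
    first | rfl | (constructor <;> linarith)

lemma hybridBall_subset_Ioo (A₁ A₂ A₃ : Set ℝ) (x r : ℝ) (hr : 0 < r) :
    hybridBall A₁ A₂ A₃ x r ⊆ Set.Ioo (x - r) (x + r) := by
  unfold hybridBall
  split_ifs <;> intro z hz <;>
    simp only [Set.mem_Ioo, Set.mem_Ico, Set.mem_Ioc, Set.mem_singleton_iff] at hz ⊢ <;>
    first
    | exact hz
    | (subst hz; constructor <;> linarith)
    | (constructor <;> linarith [hz.1, hz.2])

lemma hybridBall_halving (A₁ A₂ A₃ : Set ℝ) (x y ε δ : ℝ) (hε : 0 < ε) (hδ : 0 < δ)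
    (hy : y ∉ hybridBall A₁ A₂ A₃ x ε) (hx : x ∉ hybridBall A₁ A₂ A₃ y δ) :
    Disjoint (hybridBall A₁ A₂ A₃ x (ε / 2)) (hybridBall A₁ A₂ A₃ y (δ / 2)) := by
  rw [Set.disjoint_left]
  intro z hz1 hz2
  unfold hybridBall at hz1 hz2 hy hx
  split_ifs at hz1 hz2 hy hx <;>
    simp only [Set.mem_Ioo, Set.mem_Ico, Set.mem_Ioc, Set.mem_singleton_iff,
      not_and_or, not_lt, not_le] at hz1 hz2 hy hx <;>
    (try subst hz1) <;> (try subst hz2) <;>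
    first
    | exact hy rfl
    | exact hx rfl
    | (rcases hy with hy | hy <;> rcases hx with hx | hx <;> linarith)
    | (rcases hy with hy | hy <;> linarith)
    | (rcases hx with hx | hx <;> linarith)
    | linarith

lemma hybridBall_mono (A₁ A₂ A₃ : Set ℝ) (x : ℝ) {r s : ℝ} (h : r ≤ s) :
    hybridBall A₁ A₂ A₃ x r ⊆ hybridBall A₁ A₂ A₃ x s := by
  unfold hybridBall
  split_ifs <;> intro z hz <;>
    simp only [Set.mem_Ioo, Set.mem_Ico, Set.mem_Ioc, Set.mem_singleton_iff] at hz ⊢ <;>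
    first
    | exact hz
    | (constructor <;> linarith [hz.1, hz.2])

/-- Balls form a neighborhood basis for the hybrid topology. -/
lemma hybridBall_basis (A₁ A₂ A₃ A₄ : Set ℝ)
    (h12 : Disjoint A₁ A₂) (h13 : Disjoint A₁ A₃) (h14 : Disjoint A₁ A₄)
    (h23 : Disjoint A₂ A₃) (h24 : Disjoint A₂ A₄) (h34 : Disjoint A₃ A₄)
    (U : Set ℝ)
    (hU : TopologicalSpace.GenerateOpen
      ({S : Set ℝ | ∃ x ∈ A₁, ∃ ε : ℝ, 0 < ε ∧ S = Set.Ioo (x - ε) (x + ε)} ∪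
       {S : Set ℝ | ∃ x ∈ A₂, S = {x}} ∪
       {S : Set ℝ | ∃ x ∈ A₃, ∃ ε : ℝ, 0 < ε ∧ S = Set.Ico x (x + ε)} ∪
       {S : Set ℝ | ∃ x ∈ A₄, ∃ ε : ℝ, 0 < ε ∧ S = Set.Ioc (x - ε) x}) U) :
    ∀ x ∈ U, ∃ r : ℝ, 0 < r ∧ hybridBall A₁ A₂ A₃ x r ⊆ U := by
  classical
  induction hU with
  | univ => exact fun x _ => ⟨1, one_pos, by simp⟩
  | inter S T _ _ ihS ihT =>
      intro x hx
      obtain ⟨r₁, hr₁, hs₁⟩ := ihS x hx.1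
      obtain ⟨r₂, hr₂, hs₂⟩ := ihT x hx.2
      exact ⟨min r₁ r₂, lt_min hr₁ hr₂,
        subset_inter ((hybridBall_mono _ _ _ _ (min_le_left _ _)).trans hs₁)
          ((hybridBall_mono _ _ _ _ (min_le_right _ _)).trans hs₂)⟩
  | sUnion 𝒮 _ ih =>
      intro x hx
      obtain ⟨S, hS, hxS⟩ := hx
      obtain ⟨r, hr, hs⟩ := ih S hS x hxS
      exact ⟨r, hr, hs.trans (Set.subset_sUnion_of_mem hS)⟩
  | basic S hS =>
      intro x hx
      rcases hS with ((⟨a, ha, ε, hε, rfl⟩ | ⟨a, ha, rfl⟩) | ⟨a, ha, ε, hε, rfl⟩) |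
        ⟨a, ha, ε, hε, rfl⟩
      · -- Ioo (a-ε) (a+ε)
        simp only [Set.mem_Ioo] at hx
        refine ⟨min (x - (a - ε)) (a + ε - x), lt_min (by linarith [hx.1]) (by linarith [hx.2]), ?_⟩
        intro z hz
        have := hybridBall_subset_Ioo A₁ A₂ A₃ x _
          (lt_min (by linarith [hx.1]) (by linarith [hx.2])) hz
        simp only [Set.mem_Ioo] at this ⊢
        constructor
        · have h1 : x - min (x - (a - ε)) (a + ε - x) ≥ a - ε := by
            have := min_le_left (x - (a - ε)) (a + ε - x); linarith
          linarith [this.1]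
        · have h2 : x + min (x - (a - ε)) (a + ε - x) ≤ a + ε := by
            have := min_le_right (x - (a - ε)) (a + ε - x); linarith
          linarith [this.2]
      · -- {a}
        simp only [Set.mem_singleton_iff] at hx
        subst hx
        refine ⟨1, one_pos, ?_⟩
        unfold hybridBall
        rw [if_neg (fun h => h12.ne_of_mem h ha rfl), if_pos ha]
      · -- Ico a (a+ε)
        simp only [Set.mem_Ico] at hx
        rcases eq_or_lt_of_le hx.1 with rfl | hlt
        · refine ⟨ε, hε, ?_⟩
          unfold hybridBall
          rw [if_neg (fun h => h13.ne_of_mem h ha rfl),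
            if_neg (fun h => h23.ne_of_mem h ha rfl), if_pos ha]
        · refine ⟨min (x - a) (a + ε - x), lt_min (by linarith) (by linarith [hx.2]), ?_⟩
          intro z hz
          have := hybridBall_subset_Ioo A₁ A₂ A₃ x _
            (lt_min (by linarith) (by linarith [hx.2])) hz
          simp only [Set.mem_Ioo] at this
          simp only [Set.mem_Ico]
          have m1 := min_le_left (x - a) (a + ε - x)
          have m2 := min_le_right (x - a) (a + ε - x)
          constructor <;> linarith [this.1, this.2]
      · -- Ioc (a-ε) a
        simp only [Set.mem_Ioc] at hx
        rcases eq_or_lt_of_le hx.2 with rfl | hlt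
        · refine ⟨ε, hε, ?_⟩
          unfold hybridBall
          rw [if_neg (fun h => h14.ne_of_mem h ha rfl),
            if_neg (fun h => h24.ne_of_mem h ha rfl),
            if_neg (fun h => h34.ne_of_mem h ha rfl)]
        · refine ⟨min (x - (a - ε)) (a - x), lt_min (by linarith [hx.1]) (by linarith), ?_⟩
          intro z hz
          have := hybridBall_subset_Ioo A₁ A₂ A₃ x _
            (lt_min (by linarith [hx.1]) (by linarith)) hz
          simp only [Set.mem_Ioo] at this
          simp only [Set.mem_Ioc]
          have m1 := min_le_left (x - (a - ε)) (a - x)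
          have m2 := min_le_right (x - (a - ε)) (a - x)
          constructor <;> linarith [this.1, this.2]

lemma hybridBall_open (A₁ A₂ A₃ A₄ : Set ℝ) (hcup : A₁ ∪ A₂ ∪ A₃ ∪ A₄ = Set.univ)
    (x r : ℝ) (hr : 0 < r) :
    TopologicalSpace.GenerateOpen
      ({S : Set ℝ | ∃ x ∈ A₁, ∃ ε : ℝ, 0 < ε ∧ S = Set.Ioo (x - ε) (x + ε)} ∪
       {S : Set ℝ | ∃ x ∈ A₂, S = {x}} ∪
       {S : Set ℝ | ∃ x ∈ A₃, ∃ ε : ℝ, 0 < ε ∧ S = Set.Ico x (x + ε)} ∪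
       {S : Set ℝ | ∃ x ∈ A₄, ∃ ε : ℝ, 0 < ε ∧ S = Set.Ioc (x - ε) x})
      (hybridBall A₁ A₂ A₃ x r) := by
  apply TopologicalSpace.GenerateOpen.basic
  unfold hybridBall
  split_ifs with h1 h2 h3
  · exact Or.inl (Or.inl (Or.inl ⟨x, h1, r, hr, rfl⟩))
  · exact Or.inl (Or.inl (Or.inr ⟨x, h2, rfl⟩))
  · exact Or.inl (Or.inr ⟨x, h3, r, hr, rfl⟩)
  · have hx4 : x ∈ A₄ := by
      have hx : x ∈ A₁ ∪ A₂ ∪ A₃ ∪ A₄ := hcup ▸ Set.mem_univ x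
      rcases hx with ((h | h) | h) | h <;> first | exact h | exact absurd h (by assumption)
    exact Or.inr ⟨x, hx4, r, hr, rfl⟩

/-- **Proposition 2.15 (normality).** -/
theorem hybrid_normal
    (A₁ A₂ A₃ A₄ : Set ℝ) (hcov : Is4Cover A₁ A₂ A₃ A₄) :
    ∀ C₀ C₁ : Set ℝ, @IsClosed ℝ (hybridTop A₁ A₂ A₃ A₄) C₀ →
      @IsClosed ℝ (hybridTop A₁ A₂ A₃ A₄) C₁ → Disjoint C₀ C₁ →
      ∃ U V : Set ℝ, @IsOpen ℝ (hybridTop A₁ A₂ A₃ A₄) U ∧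
        @IsOpen ℝ (hybridTop A₁ A₂ A₃ A₄) V ∧ C₀ ⊆ U ∧ C₁ ⊆ V ∧ Disjoint U V := by
  obtain ⟨hcup, h12, h13, h14, h23, h24, h34⟩ := hcov
  intro C₀ C₁ hC₀ hC₁ hdisj
  -- Openness in hybridTop is GenerateOpen of the generators
  have hopen_iff : ∀ S : Set ℝ, @IsOpen ℝ (hybridTop A₁ A₂ A₃ A₄) S ↔
      TopologicalSpace.GenerateOpen
        ({S : Set ℝ | ∃ x ∈ A₁, ∃ ε : ℝ, 0 < ε ∧ S = Set.Ioo (x - ε) (x + ε)} ∪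
         {S : Set ℝ | ∃ x ∈ A₂, S = {x}} ∪
         {S : Set ℝ | ∃ x ∈ A₃, ∃ ε : ℝ, 0 < ε ∧ S = Set.Ico x (x + ε)} ∪
         {S : Set ℝ | ∃ x ∈ A₄, ∃ ε : ℝ, 0 < ε ∧ S = Set.Ioc (x - ε) x}) S :=
    fun S => Iff.rfl
  have hcomp₀ := hC₀.isOpen_compl
  have hcomp₁ := hC₁.isOpen_compl
  rw [hopen_iff] at hcomp₀ hcomp₁
  have key₀ : ∀ x ∈ C₀, ∃ r : ℝ, 0 < r ∧ hybridBall A₁ A₂ A₃ x r ⊆ C₁ᶜ := by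
    intro x hx
    exact hybridBall_basis A₁ A₂ A₃ A₄ h12 h13 h14 h23 h24 h34 C₁ᶜ hcomp₁ x
      (hdisj.subset_compl_right hx)
  have key₁ : ∀ y ∈ C₁, ∃ r : ℝ, 0 < r ∧ hybridBall A₁ A₂ A₃ y r ⊆ C₀ᶜ := by
    intro y hy
    exact hybridBall_basis A₁ A₂ A₃ A₄ h12 h13 h14 h23 h24 h34 C₀ᶜ hcomp₀ y
      (hdisj.symm.subset_compl_right hy)
  choose! ε hεpos hεsub using key₀
  choose! δ hδpos hδsub using key₁
  refine ⟨⋃ x ∈ C₀, hybridBall A₁ A₂ A₃ x (ε x / 2),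
    ⋃ y ∈ C₁, hybridBall A₁ A₂ A₃ y (δ y / 2), ?_, ?_, ?_, ?_, ?_⟩
  · rw [hopen_iff, ← Set.sUnion_image]
    apply TopologicalSpace.GenerateOpen.sUnion
    rintro S ⟨x, hx, rfl⟩
    exact hybridBall_open A₁ A₂ A₃ A₄ hcup x _ (by linarith [hεpos x hx])
  · rw [hopen_iff, ← Set.sUnion_image]
    apply TopologicalSpace.GenerateOpen.sUnion
    rintro S ⟨y, hy, rfl⟩
    exact hybridBall_open A₁ A₂ A₃ A₄ hcup y _ (by linarith [hδpos y hy])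
  · intro x hx
    exact Set.mem_biUnion hx (mem_hybridBall_self A₁ A₂ A₃ x _ (by linarith [hεpos x hx]))
  · intro y hy
    exact Set.mem_biUnion hy (mem_hybridBall_self A₁ A₂ A₃ y _ (by linarith [hδpos y hy]))
  · rw [Set.disjoint_left]
    intro z hz₁ hz₂
    obtain ⟨x, hx, hzx⟩ := Set.mem_iUnion₂.mp hz₁
    obtain ⟨y, hy, hzy⟩ := Set.mem_iUnion₂.mp hz₂
    have hyx : y ∉ hybridBall A₁ A₂ A₃ x (ε x) := fun h => (hεsub x hx h) hy
    have hxy : x ∉ hybridBall A₁ A₂ A₃ y (δ y) := fun h => (hδsub y hy h) hx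
    exact Set.disjoint_left.mp
      (hybridBall_halving A₁ A₂ A₃ x y (ε x) (δ y) (hεpos x hx) (hδpos y hy) hyx hxy)
      hzx hzy
end

section
/- For every 4-cover 𝒜 = {A₁, A₂, A₃, A₄} of ℝ, the hybrid space H₄(𝒜) is completely regular: for every closed set E of H₄(𝒜) and every point x ∈ ℝ \ E, there exists a continuous function f : H₄(𝒜) → [0,1] with f(x) = 0 and f(t) = 1 for all t ∈ E. -/
open Set TopologicalSpace Topology

namespace HybAux

variable {A₁ A₂ A₃ A₄ : Set ℝ}

/-- the generating family -/
def gens (A₁ A₂ A₃ A₄ : Set ℝ) : Set (Set ℝ) :=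
  ({S : Set ℝ | ∃ x ∈ A₁, ∃ ε : ℝ, 0 < ε ∧ S = Set.Ioo (x - ε) (x + ε)} ∪
   {S : Set ℝ | ∃ x ∈ A₂, S = {x}} ∪
   {S : Set ℝ | ∃ x ∈ A₃, ∃ ε : ℝ, 0 < ε ∧ S = Set.Ico x (x + ε)} ∪
   {S : Set ℝ | ∃ x ∈ A₄, ∃ ε : ℝ, 0 < ε ∧ S = Set.Ioc (x - ε) x})

lemma hybridTop_eq : hybridTop A₁ A₂ A₃ A₄ = generateFrom (gens A₁ A₂ A₃ A₄) := rfl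

lemma isOpen_iff {S : Set ℝ} :
    IsOpen[hybridTop A₁ A₂ A₃ A₄] S ↔ GenerateOpen (gens A₁ A₂ A₃ A₄) S := Iff.rfl

lemma mem4 (hU : A₁ ∪ A₂ ∪ A₃ ∪ A₄ = Set.univ) (y : ℝ) :
    y ∈ A₁ ∨ y ∈ A₂ ∨ y ∈ A₃ ∨ y ∈ A₄ := by
  have : y ∈ A₁ ∪ A₂ ∪ A₃ ∪ A₄ := hU ▸ mem_univ y
  rcases this with ((h | h) | h) | h <;> tauto

lemma isOpen_of_nbhd {S : Set ℝ}
    (h : ∀ y ∈ S, ∃ B, IsOpen[hybridTop A₁ A₂ A₃ A₄] B ∧ y ∈ B ∧ B ⊆ S) :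
    IsOpen[hybridTop A₁ A₂ A₃ A₄] S := by
  letI := hybridTop A₁ A₂ A₃ A₄
  rw [isOpen_iff_forall_mem_open]
  intro y hy
  obtain ⟨B, hB, hyB, hBS⟩ := h y hy
  exact ⟨B, hBS, hB, hyB⟩

lemma basic_open {B : Set ℝ} (hB : B ∈ gens A₁ A₂ A₃ A₄) :
    IsOpen[hybridTop A₁ A₂ A₃ A₄] B :=
  isOpen_iff.mpr (GenerateOpen.basic _ hB)

/-- every euclidean-open set is hybrid-open -/
lemma eucl_open (hU : A₁ ∪ A₂ ∪ A₃ ∪ A₄ = Set.univ) {S : Set ℝ} (hS : IsOpen S) :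
    IsOpen[hybridTop A₁ A₂ A₃ A₄] S := by
  apply isOpen_of_nbhd
  intro y hy
  obtain ⟨ε, hε, hball⟩ := Metric.isOpen_iff.mp hS y hy
  have hsub : Set.Ioo (y - ε) (y + ε) ⊆ S := by
    rw [← Real.ball_eq_Ioo]; exact hball
  rcases mem4 hU y with h | h | h | h
  · exact ⟨Set.Ioo (y - ε) (y + ε),
      basic_open (Or.inl (Or.inl (Or.inl ⟨y, h, ε, hε, rfl⟩))),
      ⟨by linarith, by linarith⟩, hsub⟩
  · refine ⟨{y}, basic_open (Or.inl (Or.inl (Or.inr ⟨y, h, rfl⟩))), rfl, ?_⟩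
    exact singleton_subset_iff.mpr hy
  · refine ⟨Set.Ico y (y + ε),
      basic_open (Or.inl (Or.inr ⟨y, h, ε, hε, rfl⟩)), ⟨le_refl y, by linarith⟩, ?_⟩
    exact fun z hz => hsub ⟨by linarith [hz.1], hz.2⟩
  · refine ⟨Set.Ioc (y - ε) y,
      basic_open (Or.inr ⟨y, h, ε, hε, rfl⟩), ⟨by linarith, le_refl y⟩, ?_⟩
    exact fun z hz => hsub ⟨hz.1, by linarith [hz.2]⟩

lemma cont_of_eucl (hU : A₁ ∪ A₂ ∪ A₃ ∪ A₄ = Set.univ) {f : ℝ → ℝ} (hf : Continuous f) :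
    @Continuous ℝ ℝ (hybridTop A₁ A₂ A₃ A₄) inferInstance f := by
  rw [continuous_def]
  intro s hs
  exact eucl_open hU (hf.isOpen_preimage s hs)

lemma ici_open (hU : A₁ ∪ A₂ ∪ A₃ ∪ A₄ = Set.univ) {x : ℝ} (hx : x ∈ A₃) :
    IsOpen[hybridTop A₁ A₂ A₃ A₄] (Set.Ici x) := by
  apply isOpen_of_nbhd
  intro y hy
  rcases eq_or_lt_of_le (show x ≤ y from hy) with heq | hlt
  · refine ⟨Set.Ico x (x + 1), basic_open (Or.inl (Or.inr ⟨x, hx, 1, one_pos, rfl⟩)),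
      ⟨heq.le, by linarith [heq.ge]⟩, Set.Ico_subset_Ici_self⟩
  · exact ⟨Set.Ioi x, eucl_open hU isOpen_Ioi, hlt, Set.Ioi_subset_Ici_self⟩

lemma iic_open (hU : A₁ ∪ A₂ ∪ A₃ ∪ A₄ = Set.univ) {x : ℝ} (hx : x ∈ A₄) :
    IsOpen[hybridTop A₁ A₂ A₃ A₄] (Set.Iic x) := by
  apply isOpen_of_nbhd
  intro y hy
  rcases eq_or_lt_of_le (show y ≤ x from hy) with heq | hlt
  · refine ⟨Set.Ioc (x - 1) x, basic_open (Or.inr ⟨x, hx, 1, one_pos, rfl⟩),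
      ⟨by linarith [heq.le], heq.le⟩, Set.Ioc_subset_Iic_self⟩
  · exact ⟨Set.Iio x, eucl_open hU isOpen_Iio, hlt, Set.Iio_subset_Iic_self⟩

lemma cont_locConst {f : ℝ → ℝ}
    (h : ∀ y, ∃ U, IsOpen[hybridTop A₁ A₂ A₃ A₄] U ∧ y ∈ U ∧ ∀ z ∈ U, f z = f y) :
    @Continuous ℝ ℝ (hybridTop A₁ A₂ A₃ A₄) inferInstance f := by
  rw [continuous_def]
  intro s _
  apply isOpen_of_nbhd
  intro y hy
  obtain ⟨U, hUo, hyU, hconst⟩ := h y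
  exact ⟨U, hUo, hyU, fun z hz => by simp only [Set.mem_preimage, hconst z hz]; exact hy⟩

/-- the key local lemma -/
lemma mem_open (hcov : Is4Cover A₁ A₂ A₃ A₄) {S : Set ℝ}
    (hS : GenerateOpen (gens A₁ A₂ A₃ A₄) S) :
    ∀ y ∈ S, ∃ ε : ℝ, 0 < ε ∧
      (y ∈ A₁ → Set.Ioo (y - ε) (y + ε) ⊆ S) ∧
      (y ∈ A₃ → Set.Ico y (y + ε) ⊆ S) ∧
      (y ∈ A₄ → Set.Ioc (y - ε) y ⊆ S) := by
  obtain ⟨hU, d12, d13, d14, d23, d24, d34⟩ := hcov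
  induction hS with
  | basic B hB =>
    intro y hy
    rcases hB with ((h1 | h2) | h3) | h4
    · obtain ⟨a, _, ε, hε, rfl⟩ := h1
      obtain ⟨hy1, hy2⟩ := hy
      refine ⟨min (y - (a - ε)) (a + ε - y), by simp [lt_min_iff]; constructor <;> linarith,
        ?_, ?_, ?_⟩ <;> intro _ z hz
      · have := min_le_left (y - (a - ε)) (a + ε - y)
        have := min_le_right (y - (a - ε)) (a + ε - y)
        exact ⟨by linarith [hz.1], by linarith [hz.2]⟩
      · have := min_le_right (y - (a - ε)) (a + ε - y)
        exact ⟨by linarith [hz.1], by linarith [hz.2]⟩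
      · have := min_le_left (y - (a - ε)) (a + ε - y)
        exact ⟨by linarith [hz.1], by linarith [hz.2]⟩
    · obtain ⟨a, ha, rfl⟩ := h2
      have hya : y = a := hy
      subst hya
      exact ⟨1, one_pos,
        fun h => absurd ha (disjoint_left.mp d12 h),
        fun h => absurd h (disjoint_left.mp d23 ha),
        fun h => absurd h (disjoint_left.mp d24 ha)⟩
    · obtain ⟨a, ha, ε, hε, rfl⟩ := h3
      obtain ⟨hy1, hy2⟩ := hy
      rcases eq_or_lt_of_le hy1 with heq | hlt
      · subst heq
        exact ⟨ε, hε,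
          fun h => absurd ha (disjoint_left.mp d13 h),
          fun _ => subset_refl _,
          fun h => absurd h (disjoint_left.mp d34 ha)⟩
      · refine ⟨min (y - a) (a + ε - y), by simp [lt_min_iff]; constructor <;> linarith,
          ?_, ?_, ?_⟩ <;> intro _ z hz
        · have := min_le_left (y - a) (a + ε - y)
          have := min_le_right (y - a) (a + ε - y)
          exact ⟨by linarith [hz.1], by linarith [hz.2]⟩
        · have := min_le_right (y - a) (a + ε - y)
          exact ⟨by linarith [hz.1], by linarith [hz.2]⟩
        · have := min_le_left (y - a) (a + ε - y)
          exact ⟨by linarith [hz.1], by linarith [hz.2]⟩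
    · obtain ⟨a, ha, ε, hε, rfl⟩ := h4
      obtain ⟨hy1, hy2⟩ := hy
      rcases eq_or_lt_of_le hy2 with heq | hlt
      · subst heq
        exact ⟨ε, hε,
          fun h => absurd ha (disjoint_left.mp d14 h),
          fun h => absurd ha (disjoint_left.mp d34 h),
          fun _ => subset_refl _⟩
      · refine ⟨min (y - (a - ε)) (a - y), by simp [lt_min_iff]; constructor <;> linarith,
          ?_, ?_, ?_⟩ <;> intro _ z hz
        · have := min_le_left (y - (a - ε)) (a - y)
          have := min_le_right (y - (a - ε)) (a - y)
          exact ⟨by linarith [hz.1], by linarith [hz.2]⟩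
        · have := min_le_right (y - (a - ε)) (a - y)
          have := min_le_left (y - (a - ε)) (a - y)
          exact ⟨by linarith [hz.1], by linarith [hz.2]⟩
        · have := min_le_left (y - (a - ε)) (a - y)
          exact ⟨by linarith [hz.1], by linarith [hz.2]⟩
  | univ =>
    exact fun y _ => ⟨1, one_pos, fun _ => subset_univ _, fun _ => subset_univ _,
      fun _ => subset_univ _⟩
  | inter S T _ _ ihS ihT =>
    intro y hy
    obtain ⟨ε₁, hε₁, a1, a3, a4⟩ := ihS y hy.1
    obtain ⟨ε₂, hε₂, b1, b3, b4⟩ := ihT y hy.2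
    refine ⟨min ε₁ ε₂, lt_min hε₁ hε₂, ?_, ?_, ?_⟩ <;> intro h z hz
    · have h1 := min_le_left ε₁ ε₂; have h2 := min_le_right ε₁ ε₂
      exact ⟨a1 h ⟨by linarith [hz.1], by linarith [hz.2]⟩,
             b1 h ⟨by linarith [hz.1], by linarith [hz.2]⟩⟩
    · have h1 := min_le_left ε₁ ε₂; have h2 := min_le_right ε₁ ε₂
      exact ⟨a3 h ⟨hz.1, by linarith [hz.2]⟩, b3 h ⟨hz.1, by linarith [hz.2]⟩⟩
    · have h1 := min_le_left ε₁ ε₂; have h2 := min_le_right ε₁ ε₂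
      exact ⟨a4 h ⟨by linarith [hz.1], hz.2⟩, b4 h ⟨by linarith [hz.1], hz.2⟩⟩
  | sUnion 𝒮 _ ih =>
    intro y hy
    obtain ⟨s, hs, hys⟩ := hy
    obtain ⟨ε, hε, a1, a3, a4⟩ := ih s hs y hys
    exact ⟨ε, hε, fun h => (a1 h).trans (subset_sUnion_of_mem hs),
      fun h => (a3 h).trans (subset_sUnion_of_mem hs),
      fun h => (a4 h).trans (subset_sUnion_of_mem hs)⟩

end HybAux

/-- **Proposition 2.15 (complete regularity).** For every 4-cover `𝒜` of ℝ, every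
closed set `E` of `H₄(𝒜)` and point `x ∉ E` are separated by a continuous function
`f : H₄(𝒜) → [0,1]` with `f x = 0` and `f ≡ 1` on `E`. -/


theorem hybrid_completelyRegular
    (A₁ A₂ A₃ A₄ : Set ℝ) (hcov : Is4Cover A₁ A₂ A₃ A₄) :
    ∀ E : Set ℝ, @IsClosed ℝ (hybridTop A₁ A₂ A₃ A₄) E → ∀ x : ℝ, x ∉ E →
      ∃ f : ℝ → ℝ, @Continuous ℝ ℝ (hybridTop A₁ A₂ A₃ A₄) inferInstance f ∧
        (∀ y : ℝ, f y ∈ Set.Icc (0 : ℝ) 1) ∧ f x = 0 ∧ ∀ t ∈ E, f t = 1 := by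
  intro E hE x hxE
  have hU := hcov.1
  have hEc : TopologicalSpace.GenerateOpen (HybAux.gens A₁ A₂ A₃ A₄) Eᶜ :=
    HybAux.isOpen_iff.mp hE.isOpen_compl
  obtain ⟨ε, hε, h1, h3, h4⟩ := HybAux.mem_open hcov hEc x hxE
  rcases HybAux.mem4 hU x with hx | hx | hx | hx
  · -- x ∈ A₁ : euclidean bump
    refine ⟨fun t => min 1 (|t - x| / ε), ?_, ?_, ?_, ?_⟩
    · exact HybAux.cont_of_eucl hU (by fun_prop)
    · intro y
      exact ⟨le_min zero_le_one (div_nonneg (abs_nonneg _) hε.le), min_le_left _ _⟩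
    · simp
    · intro t ht
      have hnot : t ∉ Set.Ioo (x - ε) (x + ε) := fun hc => (h1 hx hc) ht
      have habs : ε ≤ |t - x| := by
        by_contra hlt
        push_neg at hlt
        rw [abs_lt] at hlt
        exact hnot ⟨by linarith [hlt.1], by linarith [hlt.2]⟩
      have : (1 : ℝ) ≤ |t - x| / ε := (one_le_div hε).mpr habs
      exact min_eq_left this
  · -- x ∈ A₂ : isolated point
    refine ⟨fun t => if t = x then 0 else 1, ?_, ?_, ?_, ?_⟩
    · apply HybAux.cont_locConst
      intro y
      by_cases hy : y = x
      · subst hy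
        refine ⟨{y}, HybAux.basic_open (Or.inl (Or.inl (Or.inr ⟨y, hx, rfl⟩))), rfl, ?_⟩
        intro z hz; rw [show z = y from hz]
      · refine ⟨{x}ᶜ, HybAux.eucl_open hU isOpen_compl_singleton, hy, ?_⟩
        intro z hz
        simp only [Set.mem_compl_iff, Set.mem_singleton_iff] at hz
        rw [if_neg hz, if_neg hy]
    · intro y
      by_cases hy : y = x <;> simp [hy]
    · simp
    · intro t ht
      have : t ≠ x := fun h => hxE (h ▸ ht)
      simp [this]
  · -- x ∈ A₃
    have hIco : Set.Ico x (x + ε) ⊆ Eᶜ := h3 hx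
    refine ⟨fun t => max (min 1 (max 0 ((t - x) / ε))) (if t < x then 1 else 0),
      ?_, ?_, ?_, ?_⟩
    · have hc1 : @Continuous ℝ ℝ (hybridTop A₁ A₂ A₃ A₄) inferInstance
          (fun t => min 1 (max 0 ((t - x) / ε))) := HybAux.cont_of_eucl hU (by fun_prop)
      have hc2 : @Continuous ℝ ℝ (hybridTop A₁ A₂ A₃ A₄) inferInstance
          (fun t => if t < x then (1:ℝ) else 0) := by
        apply HybAux.cont_locConst
        intro y
        by_cases hy : y < x
        · refine ⟨Set.Iio x, HybAux.eucl_open hU isOpen_Iio, hy, ?_⟩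
          intro z hz
          rw [if_pos (show z < x from hz), if_pos hy]
        · push_neg at hy
          refine ⟨Set.Ici x, HybAux.ici_open hU hx, hy, ?_⟩
          intro z hz
          rw [if_neg (not_lt.mpr (show x ≤ z from hz)), if_neg (not_lt.mpr hy)]
      exact @Continuous.max ℝ ℝ _ _ _ _ _ (hybridTop A₁ A₂ A₃ A₄) hc1 hc2
    · intro y
      constructor
      · exact le_max_of_le_left (le_min zero_le_one (le_max_left _ _))
      · apply max_le (min_le_left _ _)
        by_cases hy : y < x <;> simp [hy]
    · simp [hx, not_lt.mpr (le_refl x)]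
    · intro t ht
      have hnot : t ∉ Set.Ico x (x + ε) := fun hc => (hIco hc) ht
      show max (min 1 (max 0 ((t - x) / ε))) (if t < x then 1 else 0) = 1
      by_cases hlt : t < x
      · rw [if_pos hlt]
        exact max_eq_right (min_le_left _ _)
      · push_neg at hlt
        have hge : x + ε ≤ t := by
          by_contra hc
          push_neg at hc
          exact hnot ⟨hlt, hc⟩
        rw [if_neg (not_lt.mpr hlt)]
        have h1' : (1 : ℝ) ≤ (t - x) / ε := (one_le_div hε).mpr (by linarith)
        rw [min_eq_left (le_max_of_le_right h1')]
        exact max_eq_left zero_le_one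
  · -- x ∈ A₄
    have hIoc : Set.Ioc (x - ε) x ⊆ Eᶜ := h4 hx
    refine ⟨fun t => max (min 1 (max 0 ((x - t) / ε))) (if x < t then 1 else 0),
      ?_, ?_, ?_, ?_⟩
    · have hc1 : @Continuous ℝ ℝ (hybridTop A₁ A₂ A₃ A₄) inferInstance
          (fun t => min 1 (max 0 ((x - t) / ε))) := HybAux.cont_of_eucl hU (by fun_prop)
      have hc2 : @Continuous ℝ ℝ (hybridTop A₁ A₂ A₃ A₄) inferInstance
          (fun t => if x < t then (1:ℝ) else 0) := by
        apply HybAux.cont_locConst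
        intro y
        by_cases hy : x < y
        · refine ⟨Set.Ioi x, HybAux.eucl_open hU isOpen_Ioi, hy, ?_⟩
          intro z hz
          rw [if_pos (show x < z from hz), if_pos hy]
        · push_neg at hy
          refine ⟨Set.Iic x, HybAux.iic_open hU hx, hy, ?_⟩
          intro z hz
          rw [if_neg (not_lt.mpr (show z ≤ x from hz)), if_neg (not_lt.mpr hy)]
      exact @Continuous.max ℝ ℝ _ _ _ _ _ (hybridTop A₁ A₂ A₃ A₄) hc1 hc2
    · intro y
      constructor
      · exact le_max_of_le_left (le_min zero_le_one (le_max_left _ _))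
      · apply max_le (min_le_left _ _)
        by_cases hy : x < y <;> simp [hy]
    · simp [not_lt.mpr (le_refl x)]
    · intro t ht
      have hnot : t ∉ Set.Ioc (x - ε) x := fun hc => (hIoc hc) ht
      show max (min 1 (max 0 ((x - t) / ε))) (if x < t then 1 else 0) = 1
      by_cases hlt : x < t
      · rw [if_pos hlt]
        exact max_eq_right (min_le_left _ _)
      · push_neg at hlt
        have hge : t ≤ x - ε := by
          by_contra hc
          push_neg at hc
          exact hnot ⟨hc, hlt⟩
        rw [if_neg (not_lt.mpr hlt)]
        have h1' : (1 : ℝ) ≤ (x - t) / ε := (one_le_div hε).mpr (by linarith)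
        rw [min_eq_left (le_max_of_le_right h1')]
        exact max_eq_left zero_le_one
end

section
/- A T₁ topological space is non-archimedeanly quasi-metrizable if and only if it has a σ-interior-preserving base. -/
open Set

/-- A family of open sets is interior-preserving if the intersection of every
nonempty subfamily is open. -/
def InteriorPreservingIn {X : Type*} (t : TopologicalSpace X) (U : Set (Set X)) : Prop :=
  (∀ S ∈ U, @IsOpen X t S) ∧ ∀ V ⊆ U, V.Nonempty → @IsOpen X t (⋂₀ V)

/-- A base of a topology: a family of open sets such that every open set is a
union of members of the family. -/
def IsBaseFor {X : Type*} (t : TopologicalSpace X) (B : Set (Set X)) : Prop :=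
  (∀ S ∈ B, @IsOpen X t S) ∧ ∀ U : Set X, @IsOpen X t U → ∃ C ⊆ B, U = ⋃₀ C

/-- **Theorem 2.4.** A `T₁` space is non-archimedeanly quasi-metrizable iff it has a
`σ`-interior-preserving base. -/
theorem naQuasiMetrizable_iff_sigma_interiorPreserving_base
    {X : Type*} (t : TopologicalSpace X) (h1 : @T1Space X t) :
    NAQuasiMetrizableTop t ↔
      ∃ B : Set (Set X), IsBaseFor t B ∧
        ∃ U : ℕ → Set (Set X), B = ⋃ n, U n ∧ ∀ n, InteriorPreservingIn t (U n) := by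
  classical
  constructor
  · -- Forward direction: NA quasi-metric gives a σ-interior-preserving base
    rintro ⟨ρ, ⟨⟨hpos, heq, htri⟩, hna⟩, rfl⟩
    have hballpos : ∀ n : ℕ, (0:ℝ) < (1/2:ℝ) ^ n := fun n => by positivity
    have hopen_ball : ∀ (x : X) (n : ℕ),
        @IsOpen X (quasiMetricTop ρ) {y | ρ x y < (1/2:ℝ)^n} :=
      fun x n => TopologicalSpace.GenerateOpen.basic _ ⟨x, (1/2:ℝ)^n, hballpos n, rfl⟩
    have hself : ∀ (x : X) (n : ℕ), x ∈ {y | ρ x y < (1/2:ℝ)^n} := by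
      intro x n
      show ρ x x < _
      rw [(heq x x).2 rfl]
      exact hballpos n
    have hsub : ∀ {x y : X} {r : ℝ}, ρ x y < r →
        {z | ρ y z < r} ⊆ {z | ρ x z < r} := by
      intro x y r hxy z hz
      exact lt_of_le_of_lt (hna x z y) (max_lt hxy hz)
    have hmono : ∀ (x : X) {n m : ℕ}, n ≤ m →
        {z | ρ x z < (1/2:ℝ)^m} ⊆ {z | ρ x z < (1/2:ℝ)^n} := by
      intro x n m hnm z hz
      have hz' : ρ x z < (1/2:ℝ)^m := hz
      exact lt_of_lt_of_le hz' (pow_le_pow_of_le_one (by norm_num) (by norm_num) hnm)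
    have hP : ∀ s, @IsOpen X (quasiMetricTop ρ) s →
        ∀ y ∈ s, ∃ n : ℕ, {z | ρ y z < (1/2:ℝ)^n} ⊆ s := by
      intro s hs
      have hs' : TopologicalSpace.GenerateOpen
          {B : Set X | ∃ x : X, ∃ r : ℝ, 0 < r ∧ B = {y : X | ρ x y < r}} s := hs
      induction hs' with
      | basic u hu =>
        obtain ⟨x, r, hr, rfl⟩ := hu
        intro y hy
        obtain ⟨n, hn⟩ := exists_pow_lt_of_lt_one hr (by norm_num : (1/2:ℝ) < 1)
        exact ⟨n, fun z hz => lt_of_le_of_lt (hna x z y) (max_lt hy (lt_trans hz hn))⟩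
      | univ => exact fun y _ => ⟨0, subset_univ _⟩
      | inter s₁ s₂ h₁ h₂ ih₁ ih₂ =>
        intro y hy
        obtain ⟨n₁, hn₁⟩ := ih₁ h₁ y hy.1
        obtain ⟨n₂, hn₂⟩ := ih₂ h₂ y hy.2
        exact ⟨max n₁ n₂, subset_inter ((hmono y (le_max_left _ _)).trans hn₁)
          ((hmono y (le_max_right _ _)).trans hn₂)⟩
      | sUnion S hS ih =>
        intro y hy
        obtain ⟨s, hsS, hys⟩ := hy
        obtain ⟨n, hn⟩ := ih s hsS (hS s hsS) y hys
        exact ⟨n, hn.trans (subset_sUnion_of_mem hsS)⟩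
    refine ⟨⋃ n : ℕ, {S | ∃ x : X, S = {z | ρ x z < (1/2:ℝ)^n}}, ⟨?_, ?_⟩,
      fun n => {S | ∃ x : X, S = {z | ρ x z < (1/2:ℝ)^n}}, rfl, ?_⟩
    · intro S hS
      obtain ⟨n, hS'⟩ := mem_iUnion.1 hS
      obtain ⟨x, rfl⟩ := hS'
      exact hopen_ball x n
    · intro W hW
      refine ⟨{S | (∃ (n : ℕ) (x : X), S = {z | ρ x z < (1/2:ℝ)^n}) ∧ S ⊆ W}, ?_, ?_⟩
      · rintro S ⟨⟨n, x, rfl⟩, _⟩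
        exact mem_iUnion.2 ⟨n, x, rfl⟩
      · apply Subset.antisymm
        · intro y hy
          obtain ⟨n, hn⟩ := hP W hW y hy
          exact ⟨_, ⟨⟨n, y, rfl⟩, hn⟩, hself y n⟩
        · rintro y ⟨S, ⟨_, hSW⟩, hyS⟩
          exact hSW hyS
    · intro n
      refine ⟨?_, ?_⟩
      · rintro S ⟨x, rfl⟩
        exact hopen_ball x n
      · intro V hV _
        have hVeq : ⋂₀ V = ⋃₀ ((fun y => {z | ρ y z < (1/2:ℝ)^n}) '' (⋂₀ V)) := by
          apply Subset.antisymm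
          · intro y hy
            exact ⟨_, ⟨y, hy, rfl⟩, hself y n⟩
          · rintro z ⟨_, ⟨y, hy, rfl⟩, hz⟩
            intro S hS
            obtain ⟨x, rfl⟩ := hV hS
            exact hsub (hy _ hS) hz
        rw [hVeq]
        exact TopologicalSpace.GenerateOpen.sUnion _ (by
          rintro _ ⟨y, _, rfl⟩
          exact TopologicalSpace.GenerateOpen.basic _ ⟨y, _, hballpos n, rfl⟩)
  · -- Reverse direction
    rintro ⟨B, hB, U, hBU, hU⟩
    letI := t
    haveI := h1
    set V : X → ℕ → Set X := fun x n => {y | ∀ k ≤ n, ∀ S ∈ U k, x ∈ S → y ∈ S} with hVdef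
    have hself : ∀ (x : X) (n : ℕ), x ∈ V x n := fun x n k _ S _ hxS => hxS
    have hanti : ∀ (x : X) {n m : ℕ}, n ≤ m → V x m ⊆ V x n :=
      fun x n m hnm y hy k hk S hS hxS => hy k (hk.trans hnm) S hS hxS
    have htrans : ∀ {x y : X} {n : ℕ}, y ∈ V x n → V y n ⊆ V x n :=
      fun {x y n} hy z hz k hk S hS hxS => hz k hk S hS (hy k hk S hS hxS)
    have hVopen : ∀ (x : X) (n : ℕ), IsOpen (V x n) := by
      intro x n
      have hVeq : V x n = ⋂ k ∈ Finset.range (n+1), ⋂₀ {S | S ∈ U k ∧ x ∈ S} := by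
        ext y
        simp only [hVdef, mem_setOf_eq, mem_iInter, Finset.mem_range, Nat.lt_succ_iff,
          mem_sInter]
        constructor
        · intro h k hk S hS; exact h k hk S hS.1 hS.2
        · intro h k hk S hS hxS; exact h k hk S ⟨hS, hxS⟩
      rw [hVeq]
      apply isOpen_biInter_finset
      intro k _
      rcases eq_empty_or_nonempty {S | S ∈ U k ∧ x ∈ S} with he | hne
      · rw [he, sInter_empty]; exact isOpen_univ
      · exact (hU k).2 _ (fun S hS => hS.1) hne
    have hsep : ∀ x y : X, y ≠ x → ∃ n, y ∉ V x n := by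
      intro x y hyx
      obtain ⟨C, hCB, hC⟩ := hB.2 _ (isOpen_compl_singleton (x := y))
      have hx : x ∈ ⋃₀ C := by rw [← hC]; simpa using hyx.symm
      obtain ⟨S, hSC, hxS⟩ := hx
      have hSB : S ∈ ⋃ n, U n := by rw [← hBU]; exact hCB hSC
      obtain ⟨n, hSn⟩ := mem_iUnion.1 hSB
      refine ⟨n, fun hy => ?_⟩
      have h1' : y ∈ S := hy n le_rfl S hSn hxS
      have h2' : y ∈ ({y}ᶜ : Set X) := by rw [hC]; exact ⟨S, hSC, h1'⟩
      simp at h2'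
    set ρ : X → X → ℝ :=
      fun x y => if h : ∃ n, y ∉ V x n then (1/2:ℝ) ^ (Nat.find h) else 0 with hρdef
    have key : ∀ (x y : X) (n : ℕ), ρ x y < (1/2:ℝ)^n ↔ y ∈ V x n := by
      intro x y n
      by_cases h : ∃ m, y ∉ V x m
      · have hρ : ρ x y = (1/2:ℝ) ^ (Nat.find h) := dif_pos h
        rw [hρ]
        constructor
        · intro hlt
          by_contra hy
          have hle : Nat.find h ≤ n := Nat.find_le hy
          have : (1/2:ℝ)^n ≤ (1/2:ℝ)^(Nat.find h) :=
            pow_le_pow_of_le_one (by norm_num) (by norm_num) hle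
          linarith
        · intro hy
          have hn : n < Nat.find h := by
            by_contra hle
            push_neg at hle
            exact Nat.find_spec h (hanti x hle hy)
          exact pow_lt_pow_right_of_lt_one₀ (by norm_num) (by norm_num) hn
      · push_neg at h
        have hρ : ρ x y = 0 := dif_neg (by push_neg; exact h)
        rw [hρ]
        exact iff_of_true (by positivity) (h n)
    have hnonneg : ∀ x y, 0 ≤ ρ x y := by
      intro x y
      by_cases h : ∃ n, y ∉ V x n
      · rw [show ρ x y = _ from dif_pos h]; positivity
      · rw [show ρ x y = 0 from dif_neg h]
    have hzero : ∀ x y, ρ x y = 0 ↔ x = y := by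
      intro x y
      constructor
      · intro h0
        by_contra hxy
        have h : ∃ n, y ∉ V x n := hsep x y (Ne.symm hxy)
        have hρ : ρ x y = (1/2:ℝ) ^ (Nat.find h) := dif_pos h
        rw [hρ] at h0
        have : (0:ℝ) < (1/2:ℝ) ^ (Nat.find h) := by positivity
        linarith
      · rintro rfl
        exact dif_neg (by push_neg; exact fun n => hself x n)
    have hna : ∀ x y z, ρ x y ≤ max (ρ x z) (ρ z y) := by
      intro x y z
      by_contra hlt
      push_neg at hlt
      by_cases h : ∃ n, y ∉ V x n
      · have hρ : ρ x y = (1/2:ℝ) ^ (Nat.find h) := dif_pos h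
        rw [hρ] at hlt
        have hl1 : ρ x z < (1/2:ℝ)^(Nat.find h) := lt_of_le_of_lt (le_max_left _ _) hlt
        have hl2 : ρ z y < (1/2:ℝ)^(Nat.find h) := lt_of_le_of_lt (le_max_right _ _) hlt
        exact Nat.find_spec h (htrans ((key x z _).1 hl1) ((key z y _).1 hl2))
      · have hρ : ρ x y = 0 := dif_neg h
        rw [hρ] at hlt
        exact absurd hlt (not_lt.2 (le_trans (hnonneg x z) (le_max_left _ _)))
    have htri : ∀ x y z, ρ x y ≤ ρ x z + ρ z y :=
      fun x y z => (hna x y z).trans (max_le_add_of_nonneg (hnonneg x z) (hnonneg z y))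
    refine ⟨ρ, ⟨⟨hnonneg, hzero, htri⟩, hna⟩, le_antisymm ?_ ?_⟩
    · -- t ≤ quasiMetricTop ρ : balls are t-open
      refine le_generateFrom ?_
      rintro s ⟨x, r, hr, rfl⟩
      rw [isOpen_iff_forall_mem_open]
      intro y hy
      obtain ⟨n, hn⟩ := exists_pow_lt_of_lt_one hr (by norm_num : (1/2:ℝ) < 1)
      refine ⟨V y n, ?_, hVopen y n, hself y n⟩
      intro z hz
      have hyz : ρ y z < (1/2:ℝ)^n := (key y z n).2 hz
      exact lt_of_le_of_lt (hna x z y) (max_lt hy (hyz.trans hn))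
    · -- quasiMetricTop ρ ≤ t
      refine isOpen_implies_isOpen_iff.mp ?_
      intro s hs
      obtain ⟨C, hCB, rfl⟩ := hB.2 s hs
      show TopologicalSpace.GenerateOpen _ (⋃₀ C)
      refine TopologicalSpace.GenerateOpen.sUnion _ ?_
      intro S hSC
      have hSB : S ∈ ⋃ n, U n := by rw [← hBU]; exact hCB hSC
      obtain ⟨n, hSn⟩ := mem_iUnion.1 hSB
      have hSeq : S = ⋃₀ ((fun y => {z | ρ y z < (1/2:ℝ)^n}) '' S) := by
        apply Subset.antisymm
        · intro y hy
          exact ⟨_, ⟨y, hy, rfl⟩, (key y y n).2 (hself y n)⟩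
        · rintro z ⟨_, ⟨y, hy, rfl⟩, hz⟩
          exact (key y z n).1 hz n le_rfl S hSn hy
      rw [hSeq]
      exact TopologicalSpace.GenerateOpen.sUnion _ (by
        rintro _ ⟨y, _, rfl⟩
        exact TopologicalSpace.GenerateOpen.basic _ ⟨y, _, by positivity, rfl⟩)
end

section
/- Let 𝒜 = {A₁, A₂, A₃, A₄} be a 4-cover of ℝ, let H be a subset of A₄ whose closure in 𝕊 is contained in A₂ ∪ A₄, and let q ∈ ℚ. Then the family 𝒱 = {(q, x] : x ∈ H, q < x} is an interior-preserving family of open sets in the hybrid space H₄(𝒜): each member of 𝒱 is open in H₄(𝒜) and the intersection of every nonempty subfamily of 𝒱 is open in H₄(𝒜). -/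
open Set

lemma genOpen_of_nbhds {X : Type*} {g : Set (Set X)} {S : Set X}
    (h : ∀ y ∈ S, ∃ U, U ∈ g ∧ y ∈ U ∧ U ⊆ S) :
    TopologicalSpace.GenerateOpen g S := by
  have hS : S = ⋃₀ {U | U ∈ g ∧ U ⊆ S} := by
    ext y
    constructor
    · intro hy
      obtain ⟨U, hUg, hyU, hUS⟩ := h y hy
      exact ⟨U, ⟨hUg, hUS⟩, hyU⟩
    · rintro ⟨U, ⟨_, hUS⟩, hyU⟩
      exact hUS hyU
  rw [hS]
  exact TopologicalSpace.GenerateOpen.sUnion _ fun U hU =>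
    TopologicalSpace.GenerateOpen.basic _ hU.1

lemma sorg_nbhd {o : Set ℝ}
    (ho : TopologicalSpace.GenerateOpen {S : Set ℝ | ∃ a b : ℝ, S = Set.Ico a b} o) :
    ∀ m ∈ o, ∃ ε > 0, Set.Ico m (m + ε) ⊆ o := by
  induction ho with
  | basic U hU =>
    rintro m hm
    obtain ⟨a, b, rfl⟩ := hU
    refine ⟨b - m, by linarith [hm.2], fun y hy => ⟨le_trans hm.1 hy.1, by
      have := hy.2; linarith⟩⟩
  | univ => exact fun m _ => ⟨1, one_pos, fun _ _ => trivial⟩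
  | inter s t _ _ ihs iht =>
    intro m hm
    obtain ⟨ε₁, h₁, hs⟩ := ihs m hm.1
    obtain ⟨ε₂, h₂, ht⟩ := iht m hm.2
    refine ⟨min ε₁ ε₂, lt_min h₁ h₂, fun y hy => ⟨?_, ?_⟩⟩
    · exact hs ⟨hy.1, lt_of_lt_of_le hy.2 (by linarith [min_le_left ε₁ ε₂])⟩
    · exact ht ⟨hy.1, lt_of_lt_of_le hy.2 (by linarith [min_le_right ε₁ ε₂])⟩
  | sUnion S _ ih =>
    rintro m ⟨s, hs, hms⟩
    obtain ⟨ε, hε, h⟩ := ih s hs m hms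
    exact ⟨ε, hε, h.trans (Set.subset_sUnion_of_mem hs)⟩

lemma hybrid_Ioc_open (A₁ A₂ A₃ A₄ : Set ℝ) (hcov : Is4Cover A₁ A₂ A₃ A₄)
    (q m : ℝ) (hqm : q < m) (hm : m ∈ A₂ ∪ A₄) :
    @IsOpen ℝ (hybridTop A₁ A₂ A₃ A₄) (Set.Ioc q m) := by
  obtain ⟨hu, h12, h13, h14, h23, h24, h34⟩ := hcov
  show TopologicalSpace.GenerateOpen _ _
  apply genOpen_of_nbhds
  intro y hy
  have hy4 : y ∈ A₁ ∪ A₂ ∪ A₃ ∪ A₄ := by rw [hu]; trivial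
  have hylt : y ∈ A₁ ∪ A₃ → y < m := by
    intro hy13
    rcases lt_or_eq_of_le hy.2 with h | h
    · exact h
    · subst h
      exfalso
      rcases hm with hm | hm <;> rcases hy13 with h | h
      · exact Set.disjoint_left.1 h12 h hm
      · exact Set.disjoint_left.1 h23 hm h
      · exact Set.disjoint_left.1 h14 h hm
      · exact Set.disjoint_left.1 h34 h hm
  rcases hy4 with ((h1 | h2) | h3) | h4
  · -- y ∈ A₁
    have hym := hylt (Or.inl h1)
    have hε0 : 0 < min (y - q) (m - y) := lt_min (by linarith [hy.1]) (by linarith)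
    refine ⟨Set.Ioo (y - min (y - q) (m - y)) (y + min (y - q) (m - y)),
      Or.inl (Or.inl (Or.inl ⟨y, h1, min (y - q) (m - y), hε0, rfl⟩)),
      ⟨by linarith, by linarith⟩, ?_⟩
    intro z hz
    have h1' := min_le_left (y - q) (m - y)
    have h2' := min_le_right (y - q) (m - y)
    have hz1 := hz.1
    have hz2 := hz.2
    exact ⟨by linarith, by linarith⟩
  · -- y ∈ A₂
    exact ⟨{y}, Or.inl (Or.inl (Or.inr ⟨y, h2, rfl⟩)), rfl,
      Set.singleton_subset_iff.2 hy⟩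
  · -- y ∈ A₃
    have hym := hylt (Or.inr h3)
    refine ⟨Set.Ico y (y + (m - y)), Or.inl (Or.inr ⟨y, h3, m - y, by linarith, rfl⟩),
      ⟨le_refl _, by linarith⟩, ?_⟩
    intro z hz
    exact ⟨lt_of_lt_of_le hy.1 hz.1, by have := hz.2; linarith⟩
  · -- y ∈ A₄
    refine ⟨Set.Ioc (y - (y - q)) y, Or.inr ⟨y, h4, y - q, by linarith [hy.1], rfl⟩,
      ⟨by linarith [hy.1], le_refl _⟩, ?_⟩
    intro z hz
    exact ⟨by have := hz.1; linarith, le_trans hz.2 hy.2⟩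


/-- The family `{(q, x] : x ∈ H, q < x}`, where `H ⊆ A₄` has `𝕊`-closure inside
`A₂ ∪ A₄` and `q ∈ ℚ`, is an interior-preserving family of open sets in `H₄(𝒜)`. -/
theorem hybrid_interiorPreserving_Ioc
    (A₁ A₂ A₃ A₄ : Set ℝ) (hcov : Is4Cover A₁ A₂ A₃ A₄)
    (H : Set ℝ) (hH : H ⊆ A₄) (hcl : @closure ℝ sorgenfreyTop H ⊆ A₂ ∪ A₄) (q : ℚ) :
    (∀ S ∈ {S : Set ℝ | ∃ x ∈ H, (q : ℝ) < x ∧ S = Set.Ioc (q : ℝ) x},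
        @IsOpen ℝ (hybridTop A₁ A₂ A₃ A₄) S) ∧
    (∀ V ⊆ {S : Set ℝ | ∃ x ∈ H, (q : ℝ) < x ∧ S = Set.Ioc (q : ℝ) x},
        V.Nonempty → @IsOpen ℝ (hybridTop A₁ A₂ A₃ A₄) (⋂₀ V)) := by
  
  constructor
  · rintro S ⟨x, hxH, hqx, rfl⟩
    exact hybrid_Ioc_open A₁ A₂ A₃ A₄ hcov q x hqx (Or.inr (hH hxH))
  · intro V hV hVne
    set T : Set ℝ := {x | x ∈ H ∧ (q : ℝ) < x ∧ Set.Ioc (q : ℝ) x ∈ V} with hT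
    have hTne : T.Nonempty := by
      obtain ⟨S, hS⟩ := hVne
      obtain ⟨x, hxH, hqx, rfl⟩ := hV hS
      exact ⟨x, hxH, hqx, hS⟩
    have hTbdd : BddBelow T := ⟨q, fun x hx => le_of_lt hx.2.1⟩
    set m := sInf T with hm
    have hqm : (q : ℝ) ≤ m := le_csInf hTne fun x hx => le_of_lt hx.2.1
    have hVeq : ⋂₀ V = ⋂ x ∈ T, Set.Ioc (q : ℝ) x := by
      ext y
      simp only [Set.mem_sInter, Set.mem_iInter]
      constructor
      · intro h x hx
        exact h _ hx.2.2
      · intro h S hS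
        obtain ⟨x, hxH, hqx, rfl⟩ := hV hS
        exact h x ⟨hxH, hqx, hS⟩
    rcases eq_or_lt_of_le hqm with heq | hlt
    · have hempty : ⋂₀ V = ∅ := by
        rw [hVeq]
        ext y
        simp only [Set.mem_iInter, Set.mem_empty_iff_false, iff_false]
        intro h
        obtain ⟨x₀, hx₀⟩ := id hTne
        have hy1 := (h x₀ hx₀).1
        have hym : y ≤ m := le_csInf hTne fun x hx => (h x hx).2
        rw [← heq] at hym
        exact absurd hy1 (not_lt.2 hym)
      rw [hempty]
      exact @isOpen_empty ℝ (hybridTop A₁ A₂ A₃ A₄)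
    · have hVIoc : ⋂₀ V = Set.Ioc (q : ℝ) m := by
        rw [hVeq]
        ext y
        simp only [Set.mem_iInter, Set.mem_Ioc]
        constructor
        · intro h
          obtain ⟨x₀, hx₀⟩ := id hTne
          exact ⟨(h x₀ hx₀).1, le_csInf hTne fun x hx => (h x hx).2⟩
        · intro hy x hx
          exact ⟨hy.1, le_trans hy.2 (csInf_le hTbdd hx)⟩
      have hmcl : m ∈ @closure ℝ sorgenfreyTop H := by
        rw [@mem_closure_iff]
        intro o ho hmo
        obtain ⟨ε, hε, hsub⟩ := sorg_nbhd ho m hmo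
        obtain ⟨x, hxT, hxlt⟩ := Real.lt_sInf_add_pos hTne hε
        exact ⟨x, hsub ⟨csInf_le hTbdd hxT, hxlt⟩, hxT.1⟩
      rw [hVIoc]
      exact hybrid_Ioc_open A₁ A₂ A₃ A₄ hcov q m hlt (hcl hmcl)
end

section
/- For every subset Y of ℝ, the subspace of the Sorgenfrey line 𝕊 with underlying set Y is second-countable if and only if Y is countable. -/
open Set

open Topology TopologicalSpace in
lemma sorgenfrey_isOpen_Ici (a : ℝ) : IsOpen[sorgenfreyTop] (Set.Ici a) := by
  letI := sorgenfreyTop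
  have h : Set.Ici a = ⋃ n : ℕ, Set.Ico a (a + (n + 1)) := by
    ext x
    simp only [Set.mem_Ici, Set.mem_iUnion, Set.mem_Ico]
    constructor
    · intro h
      obtain ⟨n, hn⟩ := exists_nat_gt (x - a)
      exact ⟨n, h, by linarith⟩
    · rintro ⟨n, h, -⟩; exact h
  rw [h]
  exact isOpen_iUnion fun n => TopologicalSpace.GenerateOpen.basic _ ⟨a, _, rfl⟩

/-- A subspace of the Sorgenfrey line is second-countable iff its underlying set is
countable. -/
theorem sorgenfrey_subspace_secondCountable_iff (Y : Set ℝ) :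
    @SecondCountableTopology Y
      (TopologicalSpace.induced (Subtype.val : Y → ℝ) sorgenfreyTop) ↔
    Y.Countable := by
  letI t : TopologicalSpace Y := TopologicalSpace.induced (Subtype.val : Y → ℝ) sorgenfreyTop
  constructor
  · intro h
    obtain ⟨b, hbc, -, hb⟩ := @TopologicalSpace.exists_countable_basis Y t h
    have key : ∀ y : Y, ∃ v ∈ b, y ∈ v ∧ v ⊆ Subtype.val ⁻¹' Set.Ici (y : ℝ) := by
      intro y
      exact hb.exists_subset_of_mem_open (by exact le_refl (y:ℝ))
        (@isOpen_induced Y ℝ sorgenfreyTop Subtype.val _ (sorgenfrey_isOpen_Ici (y : ℝ)))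
    choose v hvb hyv hvsub using key
    have hinj : Function.Injective v := by
      intro y z hyz
      have h1 : (z : ℝ) ≤ (y : ℝ) := hvsub z (hyz ▸ hyv y)
      have h2 : (y : ℝ) ≤ (z : ℝ) := hvsub y (hyz.symm ▸ hyv z)
      exact Subtype.ext (le_antisymm h2 h1)
    haveI : Countable ↥b := hbc.to_subtype
    haveI : Countable Y :=
      Function.Injective.countable (f := fun y : Y => (⟨v y, hvb y⟩ : ↥b))
        (fun y z hyz => hinj (congrArg Subtype.val hyz))
    exact Set.countable_coe_iff.mpr ‹Countable Y›
  · intro hY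
    refine @SecondCountableTopology.mk Y t ?_
    refine ⟨(fun p : ℝ × ℚ => Subtype.val ⁻¹' Set.Ico p.1 (p.2 : ℝ)) ''
      {p : ℝ × ℚ | p.1 ∈ Y}, ?_, ?_⟩
    · apply Set.Countable.image
      have : {p : ℝ × ℚ | p.1 ∈ Y} = Y ×ˢ (Set.univ : Set ℚ) := by
        ext p; simp [Set.mem_prod]
      rw [this]
      exact hY.prod Set.countable_univ
    · show TopologicalSpace.induced _ sorgenfreyTop = _
      rw [sorgenfreyTop, induced_generateFrom_eq]
      apply le_antisymm
      · apply le_generateFrom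
        rintro s ⟨p, hp, rfl⟩
        exact TopologicalSpace.GenerateOpen.basic _ ⟨Set.Ico p.1 (p.2 : ℝ), ⟨p.1, p.2, rfl⟩, rfl⟩
      · apply le_generateFrom
        rintro s ⟨u, ⟨a, c, rfl⟩, rfl⟩
        letI := TopologicalSpace.generateFrom
          ((fun p : ℝ × ℚ => (Subtype.val : Y → ℝ) ⁻¹' Set.Ico p.1 (p.2 : ℝ)) ''
            {p : ℝ × ℚ | p.1 ∈ Y})
        have heq : (Subtype.val : Y → ℝ) ⁻¹' Set.Ico a c =
            ⋃ p ∈ {p : ℝ × ℚ | p.1 ∈ Y ∧ a ≤ p.1 ∧ p.1 < (p.2 : ℝ) ∧ (p.2 : ℝ) ≤ c},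
              Subtype.val ⁻¹' Set.Ico p.1 (p.2 : ℝ) := by
          ext x
          simp only [Set.mem_preimage, Set.mem_Ico, Set.mem_iUnion, Set.mem_setOf_eq]
          constructor
          · rintro ⟨hax, hxc⟩
            obtain ⟨q, hq1, hq2⟩ := exists_rat_btwn hxc
            exact ⟨((x : ℝ), q), ⟨x.2, hax, hq1, le_of_lt hq2⟩, le_refl _, hq1⟩
          · rintro ⟨p, ⟨-, hap, -, hqc⟩, hpx, hxq⟩
            exact ⟨le_trans hap hpx, lt_of_lt_of_le hxq hqc⟩
        rw [heq]
        exact isOpen_biUnion fun p hp =>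
          TopologicalSpace.GenerateOpen.basic _ ⟨p, hp.1, rfl⟩
end

section
/- For every 4-cover 𝒜 = {A₁, A₂, A₃, A₄} of ℝ, the hybrid space H₄(𝒜) is a T₃-space: it is T₁ and regular, i.e. singletons are closed, and for every closed set E of H₄(𝒜) and every point x ∈ ℝ \ E there exist disjoint open sets of H₄(𝒜) separating x from E. -/
open Set

open TopologicalSpace

namespace HybridAux

variable (A₁ A₂ A₃ A₄ : Set ℝ)

def gens : Set (Set ℝ) :=
  ({S : Set ℝ | ∃ x ∈ A₁, ∃ ε : ℝ, 0 < ε ∧ S = Set.Ioo (x - ε) (x + ε)} ∪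
   {S : Set ℝ | ∃ x ∈ A₂, S = {x}} ∪
   {S : Set ℝ | ∃ x ∈ A₃, ∃ ε : ℝ, 0 < ε ∧ S = Set.Ico x (x + ε)} ∪
   {S : Set ℝ | ∃ x ∈ A₄, ∃ ε : ℝ, 0 < ε ∧ S = Set.Ioc (x - ε) x})

open Classical in
noncomputable def core (x ε : ℝ) : Set ℝ :=
  if x ∈ A₂ then {x}
  else if x ∈ A₃ then Set.Ico x (x + ε)
  else if x ∈ A₄ then Set.Ioc (x - ε) x
  else Set.Ioo (x - ε) (x + ε)

open Classical in
noncomputable def Kcore (x ε : ℝ) : Set ℝ :=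
  if x ∈ A₂ then {x}
  else if x ∈ A₃ then Set.Icc x (x + ε)
  else if x ∈ A₄ then Set.Icc (x - ε) x
  else Set.Icc (x - ε) (x + ε)

variable {A₁ A₂ A₃ A₄}

lemma mem_core {x ε : ℝ} (hε : 0 < ε) : x ∈ core A₂ A₃ A₄ x ε := by
  unfold core; split_ifs <;> simp <;> (try constructor) <;> linarith

lemma core_subset_Ioo {x ε : ℝ} (hε : 0 < ε) :
    core A₂ A₃ A₄ x ε ⊆ Set.Ioo (x - ε) (x + ε) := by
  unfold core; split_ifs <;> intro y hy <;> simp_all <;>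
    (try obtain ⟨h1, h2⟩ := hy) <;> (try constructor) <;> linarith

lemma core_subset_K {x ε : ℝ} :
    core A₂ A₃ A₄ x ε ⊆ Kcore A₂ A₃ A₄ x ε := by
  unfold core Kcore; split_ifs <;> intro y hy <;> simp_all <;>
    (try obtain ⟨h1, h2⟩ := hy) <;> (try constructor) <;> linarith

lemma K_half_subset_core {x ε : ℝ} (hε : 0 < ε) :
    Kcore A₂ A₃ A₄ x (ε/2) ⊆ core A₂ A₃ A₄ x ε := by
  unfold core Kcore; split_ifs <;> intro y hy <;> simp_all <;>
    (try obtain ⟨h1, h2⟩ := hy) <;> (try constructor) <;> linarith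

lemma core_mono {x ε δ : ℝ} (h : ε ≤ δ) :
    core A₂ A₃ A₄ x ε ⊆ core A₂ A₃ A₄ x δ := by
  unfold core; split_ifs <;> intro y hy <;> simp_all <;>
    (try obtain ⟨h1, h2⟩ := hy) <;> (try constructor) <;> linarith

lemma K_closed {x ε : ℝ} : IsClosed (Kcore A₂ A₃ A₄ x ε) := by
  unfold Kcore; split_ifs <;> first | exact isClosed_singleton | exact isClosed_Icc

lemma core_mem_gens (hcov : Is4Cover A₁ A₂ A₃ A₄) {x ε : ℝ} (hε : 0 < ε) :
    core A₂ A₃ A₄ x ε ∈ gens A₁ A₂ A₃ A₄ := by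
  obtain ⟨hu, h12, h13, h14, h23, h24, h34⟩ := hcov
  unfold core gens
  split_ifs with h2 h3 h4
  · exact Or.inl (Or.inl (Or.inr ⟨x, h2, rfl⟩))
  · exact Or.inl (Or.inr ⟨x, h3, ε, hε, rfl⟩)
  · exact Or.inr ⟨x, h4, ε, hε, rfl⟩
  · have h1 : x ∈ A₁ := by
      have : x ∈ A₁ ∪ A₂ ∪ A₃ ∪ A₄ := hu ▸ mem_univ x
      rcases this with ((h | h) | h) | h <;> first | exact h | exact absurd h ‹_›
    exact Or.inl (Or.inl (Or.inl ⟨x, h1, ε, hε, rfl⟩))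

lemma core_in_Ioo {x a b : ℝ} (ha : a < x) (hb : x < b) :
    ∃ ε > 0, core A₂ A₃ A₄ x ε ⊆ Set.Ioo a b := by
  refine ⟨min (x - a) (b - x), by simp [ha, hb], ?_⟩
  refine (core_subset_Ioo (by simp [ha, hb])).trans ?_
  intro y hy
  simp only [mem_Ioo] at hy ⊢
  have h1 := min_le_left (x - a) (b - x)
  have h2 := min_le_right (x - a) (b - x)
  constructor <;> [linarith [hy.1]; linarith [hy.2]]

lemma gens_absorb (hcov : Is4Cover A₁ A₂ A₃ A₄) {S : Set ℝ}
    (hS : S ∈ gens A₁ A₂ A₃ A₄) {x : ℝ} (hx : x ∈ S) :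
    ∃ ε > 0, core A₂ A₃ A₄ x ε ⊆ S := by
  obtain ⟨hu, h12, h13, h14, h23, h24, h34⟩ := hcov
  rcases hS with ((⟨y, hy, ε, hε, rfl⟩ | ⟨y, hy, rfl⟩) | ⟨y, hy, ε, hε, rfl⟩) | ⟨y, hy, ε, hε, rfl⟩
  · exact core_in_Ioo hx.1 hx.2
  · rcases hx with rfl
    exact ⟨1, one_pos, by unfold core; simp [hy]⟩
  · obtain hxy | hlt := eq_or_lt_of_le hx.1
    · have hx3 : x ∈ A₃ := hxy ▸ hy
      have hx2 : x ∉ A₂ := fun h => h23.ne_of_mem h hx3 rfl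
      refine ⟨ε, hε, ?_⟩
      unfold core
      rw [if_neg hx2, if_pos hx3, ← hxy]
    · exact (core_in_Ioo hlt hx.2).imp fun ε hε =>
        ⟨hε.1, hε.2.trans (fun z hz => ⟨le_of_lt hz.1, hz.2⟩)⟩
  · obtain hxy | hlt := eq_or_lt_of_le hx.2
    · have hx4 : x ∈ A₄ := hxy ▸ hy
      have hx2 : x ∉ A₂ := fun h => h24.ne_of_mem h hx4 rfl
      have hx3 : x ∉ A₃ := fun h => h34.ne_of_mem h hx4 rfl
      refine ⟨ε, hε, ?_⟩
      unfold core
      rw [if_neg hx2, if_neg hx3, if_pos hx4, hxy]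
    · exact (core_in_Ioo hx.1 hlt).imp fun ε hε =>
        ⟨hε.1, hε.2.trans (fun z hz => ⟨hz.1, le_of_lt hz.2⟩)⟩

lemma open_absorb (hcov : Is4Cover A₁ A₂ A₃ A₄) {S : Set ℝ}
    (hS : GenerateOpen (gens A₁ A₂ A₃ A₄) S) :
    ∀ x ∈ S, ∃ ε > 0, core A₂ A₃ A₄ x ε ⊆ S := by
  induction hS with
  | basic S hS => exact fun x hx => gens_absorb hcov hS hx
  | univ => exact fun x _ => ⟨1, one_pos, subset_univ _⟩
  | inter S T _ _ ihS ihT =>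
    intro x hx
    obtain ⟨ε₁, hε₁, h₁⟩ := ihS x hx.1
    obtain ⟨ε₂, hε₂, h₂⟩ := ihT x hx.2
    exact ⟨min ε₁ ε₂, lt_min hε₁ hε₂, fun y hy =>
      ⟨h₁ (core_mono (min_le_left _ _) hy), h₂ (core_mono (min_le_right _ _) hy)⟩⟩
  | sUnion 𝒮 _ ih =>
    intro x hx
    obtain ⟨T, hT, hxT⟩ := hx
    obtain ⟨ε, hε, h⟩ := ih T hT x hxT
    exact ⟨ε, hε, h.trans (subset_sUnion_of_mem hT)⟩

lemma open_of_absorb (hcov : Is4Cover A₁ A₂ A₃ A₄) {S : Set ℝ}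
    (h : ∀ x ∈ S, ∃ ε > 0, core A₂ A₃ A₄ x ε ⊆ S) :
    GenerateOpen (gens A₁ A₂ A₃ A₄) S := by
  have hs : S = ⋃₀ {T | GenerateOpen (gens A₁ A₂ A₃ A₄) T ∧ T ⊆ S} := by
    apply Subset.antisymm
    · intro x hx
      obtain ⟨ε, hε, hc⟩ := h x hx
      exact ⟨core A₂ A₃ A₄ x ε, ⟨GenerateOpen.basic _ (core_mem_gens hcov hε), hc⟩,
        mem_core hε⟩
    · exact fun x ⟨T, hT, hxT⟩ => hT.2 hxT
  rw [hs]
  exact GenerateOpen.sUnion _ fun T hT => hT.1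

lemma euclid_open_hybrid (hcov : Is4Cover A₁ A₂ A₃ A₄) {S : Set ℝ} (hS : IsOpen S) :
    GenerateOpen (gens A₁ A₂ A₃ A₄) S := by
  apply open_of_absorb hcov
  intro x hx
  obtain ⟨δ, hδ, hball⟩ := Metric.isOpen_iff.1 hS x hx
  refine ⟨δ, hδ, (core_subset_Ioo hδ).trans ?_⟩
  rw [← Real.ball_eq_Ioo]; exact hball

end HybridAux

/-- For every 4-cover `𝒜` of ℝ, the hybrid space `H₄(𝒜)` is a `T₃`-space:
singletons are closed, and every point can be separated from a disjoint closed set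
by disjoint open sets. -/
theorem hybrid_T3
    (A₁ A₂ A₃ A₄ : Set ℝ) (hcov : Is4Cover A₁ A₂ A₃ A₄) :
    (∀ x : ℝ, @IsClosed ℝ (hybridTop A₁ A₂ A₃ A₄) {x}) ∧
    (∀ E : Set ℝ, @IsClosed ℝ (hybridTop A₁ A₂ A₃ A₄) E → ∀ x : ℝ, x ∉ E →
      ∃ U V : Set ℝ, @IsOpen ℝ (hybridTop A₁ A₂ A₃ A₄) U ∧
        @IsOpen ℝ (hybridTop A₁ A₂ A₃ A₄) V ∧ x ∈ U ∧ E ⊆ V ∧ Disjoint U V) := by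
  classical
  have hopen : ∀ S : Set ℝ, @IsOpen ℝ (hybridTop A₁ A₂ A₃ A₄) S ↔
      TopologicalSpace.GenerateOpen (HybridAux.gens A₁ A₂ A₃ A₄) S := fun S => Iff.rfl
  constructor
  · intro x
    have h : TopologicalSpace.GenerateOpen (HybridAux.gens A₁ A₂ A₃ A₄) ({x}ᶜ) :=
      HybridAux.euclid_open_hybrid hcov
        ((isClosed_singleton (X := ℝ) (x := x)).isOpen_compl)
    exact @IsClosed.mk ℝ (hybridTop A₁ A₂ A₃ A₄) {x} ((hopen _).2 h)
  · intro E hE x hxE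
    have hEc : TopologicalSpace.GenerateOpen (HybridAux.gens A₁ A₂ A₃ A₄) Eᶜ :=
      (hopen _).1 hE.isOpen_compl
    obtain ⟨ε, hε, hc⟩ := HybridAux.open_absorb hcov hEc x hxE
    have hε2 : (0:ℝ) < ε / 2 := by linarith
    refine ⟨HybridAux.core A₂ A₃ A₄ x (ε/2), (HybridAux.Kcore A₂ A₃ A₄ x (ε/2))ᶜ,
      ?_, ?_, ?_, ?_, ?_⟩
    · exact (hopen _).2
        (TopologicalSpace.GenerateOpen.basic _ (HybridAux.core_mem_gens hcov hε2))
    · exact (hopen _).2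
        (HybridAux.euclid_open_hybrid hcov HybridAux.K_closed.isOpen_compl)
    · exact HybridAux.mem_core hε2
    · intro y hy hyK
      exact hc (HybridAux.K_half_subset_core hε hyK) hy
    · exact Set.disjoint_left.2 fun y hy hyc => hyc (HybridAux.core_subset_K hy)
end
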